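/- arXiv:2410.11222 — 3 statements merged into one kernel-verified Lean document; each statement's English description precedes it below -/
import Mathlib

section
/- Let G_n be the sequence of mixing measures with N*+1 atoms obtained from G* by splitting its first atom: exp(c₁ⁿ) = exp(c₂ⁿ) = ½exp(c*₁) + 1/(2n^{r+1}), A₁ⁿ = A₂ⁿ = A*₁, b₁ⁿ = b₂ⁿ = b*₁, β₁₁ⁿ = β₁₂ⁿ = β*₁₁, β₀₁ⁿ = β*₀₁ + 1/n, β₀₂ⁿ = β*₀₁ − 1/n, and whose remaining atoms coincide with the remaining atoms of G*. Then (i) L_{2,r}(G_n, G*) = 1/n^{r+1} + (exp(c*₁) + 1/n^{r+1})·(1/n^r), so L_{2,r}(G_n, G*) = Θ(n^{−r}); (ii) the mixture difference satisfies the pointwise bound |f_{G_n}(x) − f_{G*}(x)| ≤ C·n^{−(r+1)} uniformly over the bounded support of μ for some constant C; consequently ‖f_{G_n} − f_{G*}‖_{L²(μ)} / L_{2,r}(G_n, G*) → 0 as n → ∞. -/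
open MeasureTheory ProbabilityTheory Filter Finset

noncomputable section

/-- Quadratic form `xᵀ A x`. -/
def qform {d : ℕ} (A : Fin d → Fin d → ℝ) (x : Fin d → ℝ) : ℝ :=
  ∑ u, ∑ v, A u v * x u * x v

/-- Dot product `bᵀ x`. -/
def dotp {d : ℕ} (b x : Fin d → ℝ) : ℝ := ∑ u, b u * x u

/-- A mixing measure with `k` atoms for the quadratic polynomial gating MoE
with linear experts (weights are `exp (c i)`). -/
structure LinMix (d k : ℕ) where
  A : Fin k → Fin d → Fin d → ℝ
  b : Fin k → Fin d → ℝ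
  c : Fin k → ℝ
  β1 : Fin k → Fin d → ℝ
  β0 : Fin k → ℝ

/-- The quadratic-polynomial-gated mixture of linear experts `f_G`. -/
def linMoE {d k : ℕ} (G : LinMix d k) (x : Fin d → ℝ) : ℝ :=
  ∑ i, (Real.exp (qform (G.A i) x + dotp (G.b i) x + G.c i) /
      ∑ j, Real.exp (qform (G.A j) x + dotp (G.b j) x + G.c j)) *
    (dotp (G.β1 i) x + G.β0 i)

/-- All parameters of the mixing measure lie in `Θ`. -/
def inClassL {d k : ℕ}
    (Θ : Set ((Fin d → Fin d → ℝ) × (Fin d → ℝ) × ℝ × (Fin d → ℝ) × ℝ))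
    (G : LinMix d k) : Prop :=
  ∀ i, (G.A i, G.b i, G.c i, G.β1 i, G.β0 i) ∈ Θ

/-- Atom (without weight) of a linear-expert mixing measure. -/
def ωl {d k : ℕ} (G : LinMix d k) (i : Fin k) :
    (Fin d → Fin d → ℝ) × (Fin d → ℝ) × (Fin d → ℝ) × ℝ :=
  (G.A i, G.b i, G.β1 i, G.β0 i)

/-- The discrete measure `Σ_i exp(c_i) δ_{(A_i,b_i,β₁ᵢ,β₀ᵢ)}` induced by a
mixing measure on the parameter space. -/
def linMeas {d k : ℕ} (G : LinMix d k) :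
    Measure ((Fin d → Fin d → ℝ) × (Fin d → ℝ) × (Fin d → ℝ) × ℝ) :=
  ∑ i, (ENNReal.ofReal (Real.exp (G.c i))) • Measure.dirac (ωl G i)

open scoped Classical in
/-- Voronoi cell `V_j(G')` of the `j`-th atom of `G` among the atoms of `G'`. -/
def vcellL {d k ks : ℕ} (G' : LinMix d k) (G : LinMix d ks) (j : Fin ks) :
    Finset (Fin k) :=
  Finset.univ.filter fun i => ∀ ℓ, ℓ ≠ j → ‖ωl G' i - ωl G j‖ ≤ ‖ωl G' i - ωl G ℓ‖

/-- The Voronoi loss `L_{2,r}(G', G)`. -/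
def lossL2r {d k ks : ℕ} (r : ℝ) (G' : LinMix d k) (G : LinMix d ks) : ℝ :=
  (∑ j, ∑ i ∈ vcellL G' G j, Real.exp (G'.c i) *
      (‖G'.A i - G.A j‖ ^ r + ‖G'.b i - G.b j‖ ^ r
        + ‖G'.β1 i - G.β1 j‖ ^ r + |G'.β0 i - G.β0 j| ^ r))
  + ∑ j, |∑ i ∈ vcellL G' G j, Real.exp (G'.c i) - Real.exp (G.c j)|

/-- `L²(μ)` distance between two functions. -/
def l2dist {d : ℕ} (μ : Measure (Fin d → ℝ)) (f g : (Fin d → ℝ) → ℝ) : ℝ :=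
  Real.sqrt (∫ x, (f x - g x) ^ 2 ∂μ)

/-!
Splitting the first atom of `G*` into two halves with the same gate and intercepts shifted by
`±1/n` does not change the mixture except through the total weight: the shifts cancel in the
gate-weighted average, so `f_{G_n}` is `f_{G*}` with its first weight raised by
`ε = n^{-(r+1)}`, and a weighted average moves by `O(ε)` when one weight grows by `ε`.
The Voronoi loss instead charges each half its parameter distance `(1/n)^r`, so it is of
order `n^{-r}`, and the ratio of the two is `O(1/n)`.
-/

open Topology

section CenterMass

variable {ι : Type*} [Fintype ι] {w z : ι → ℝ} {i₀ : ι} {δ M : ℝ}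

lemma centerMass_add_piSingle_sub_centerMass [DecidableEq ι] (hw : ∑ i, w i ≠ 0)
    (hwδ : ∑ i, w i + δ ≠ 0) :
    univ.centerMass (w + Pi.single i₀ δ) z - univ.centerMass w z =
      δ / (∑ i, w i + δ) * (z i₀ - univ.centerMass w z) := by
  simp only [centerMass, smul_eq_mul, Pi.add_apply, add_mul, sum_add_distrib, Pi.single_apply,
    ite_mul, zero_mul, sum_ite_eq', mem_univ, if_true]
  field_simp
  ring

lemma abs_sub_centerMass_le (hw : ∀ i, 0 ≤ w i) (hw₀ : 0 < ∑ i, w i)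
    (hz : ∀ j, |z i₀ - z j| ≤ M) : |z i₀ - univ.centerMass w z| ≤ M := by
  have hmem := (convex_closedBall (z i₀) M).centerMass_mem (t := univ) (fun i _ => hw i) hw₀
    fun j _ => by simpa [Real.dist_eq, abs_sub_comm] using hz j
  simpa [Real.dist_eq, abs_sub_comm] using hmem

lemma abs_centerMass_add_piSingle_sub_le [DecidableEq ι] (hw : ∀ i, 0 < w i) (hδ : 0 ≤ δ)
    (hz : ∀ j, |z i₀ - z j| ≤ M) :
    |univ.centerMass (w + Pi.single i₀ δ) z - univ.centerMass w z| ≤ δ / w i₀ * M := by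
  have hS : 0 < ∑ i, w i := sum_pos (fun i _ => hw i) ⟨i₀, mem_univ _⟩
  have hw₀S : w i₀ ≤ ∑ i, w i + δ :=
    (single_le_sum (fun i _ => (hw i).le) (mem_univ i₀)).trans (le_add_of_nonneg_right hδ)
  rw [centerMass_add_piSingle_sub_centerMass hS.ne' (by linarith), abs_mul,
    abs_of_nonneg (div_nonneg hδ (by linarith))]
  exact mul_le_mul (div_le_div_of_nonneg_left hδ (hw i₀) hw₀S)
    (abs_sub_centerMass_le (fun i => (hw i).le) hS hz) (abs_nonneg _)
    (div_nonneg hδ (hw i₀).le)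

end CenterMass

lemma l2dist_le_of_ae_abs_sub_le {d : ℕ} {μ : Measure (Fin d → ℝ)} [IsProbabilityMeasure μ]
    {f g : (Fin d → ℝ) → ℝ} {K : ℝ} (hK : 0 ≤ K) (h : ∀ᵐ x ∂μ, |f x - g x| ≤ K) :
    l2dist μ f g ≤ K := by
  have hint : ∫ x, (f x - g x) ^ 2 ∂μ ≤ K ^ 2 := by
    calc ∫ x, (f x - g x) ^ 2 ∂μ ≤ ∫ _, K ^ 2 ∂μ :=
          integral_mono_of_nonneg (.of_forall fun _ => sq_nonneg _) (integrable_const _)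
            (h.mono fun x hx => sq_le_sq' (abs_le.mp hx).1 (abs_le.mp hx).2)
      _ = K ^ 2 := by simp
  exact Real.sqrt_le_iff.mpr ⟨hK, hint⟩

lemma eventually_forall_two_mul_lt_norm_sub {ι E : Type*} [Finite ι] [NormedAddCommGroup E]
    {v : ι → E} (hv : Function.Injective v) (i : ι) :
    ∀ᶠ n : ℕ in atTop, ∀ ℓ, ℓ ≠ i → 2 * |1 / (n : ℝ)| < ‖v i - v ℓ‖ := by
  refine eventually_all.mpr fun ℓ => ?_
  by_cases hℓ : ℓ = i
  · exact .of_forall fun _ hne => absurd hℓ hne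
  have hpos : 0 < ‖v i - v ℓ‖ := norm_pos_iff.mpr (sub_ne_zero.mpr (hv.ne (Ne.symm hℓ)))
  have hlim : Tendsto (fun n : ℕ => 2 * |1 / (n : ℝ)|) atTop (𝓝 0) := by
    simpa using (tendsto_one_div_atTop_nhds_zero_nat.abs).const_mul (2 : ℝ)
  exact (hlim.eventually (gt_mem_nhds hpos)).mono fun _ h _ => h

lemma mul_rpow_neg_le_and_le_mul_rpow_neg {a r : ℝ} (hr : 0 ≤ r) {n : ℕ} (hn : 1 ≤ n) :
    a * (n : ℝ) ^ (-r) ≤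
      1 / (n : ℝ) ^ (r + 1) + (a + 1 / (n : ℝ) ^ (r + 1)) * (1 / (n : ℝ) ^ r) ∧
    1 / (n : ℝ) ^ (r + 1) + (a + 1 / (n : ℝ) ^ (r + 1)) * (1 / (n : ℝ) ^ r) ≤
      (a + 2) * (n : ℝ) ^ (-r) := by
  have hn1 : (1 : ℝ) ≤ n := by exact_mod_cast hn
  have hnr : 0 < (n : ℝ) ^ r := by positivity
  have hle : 1 / (n : ℝ) ^ (r + 1) ≤ 1 / (n : ℝ) ^ r :=
    one_div_le_one_div_of_le hnr (Real.rpow_le_rpow_of_exponent_le hn1 (by linarith))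
  have hle1 : 1 / (n : ℝ) ^ (r + 1) ≤ 1 := by
    rw [div_le_one (by positivity)]; exact Real.one_le_rpow hn1 (by linarith)
  have hpos : 0 < 1 / (n : ℝ) ^ (r + 1) := by positivity
  rw [Real.rpow_neg (by positivity), ← one_div]
  constructor <;> nlinarith [mul_le_mul_of_nonneg_right hle1 (one_div_pos.mpr hnr).le,
    mul_pos hpos (one_div_pos.mpr hnr)]

lemma tendsto_div_of_le_rpow_of_rpow_le {a b : ℕ → ℝ} {C c r : ℝ} (hc : 0 < c)
    (ha₀ : ∀ n, 0 ≤ a n) (ha : ∀ᶠ n : ℕ in atTop, a n ≤ C * (n : ℝ) ^ (-(r + 1)))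
    (hb : ∀ᶠ n : ℕ in atTop, c * (n : ℝ) ^ (-r) ≤ b n) :
    Tendsto (fun n => a n / b n) atTop (𝓝 0) := by
  have hlim : Tendsto (fun n : ℕ => C / c * (n : ℝ)⁻¹) atTop (𝓝 0) := by
    simpa using tendsto_inv_atTop_nhds_zero_nat.const_mul (C / c)
  refine tendsto_of_tendsto_of_tendsto_of_le_of_le' tendsto_const_nhds hlim ?_ ?_
  · filter_upwards [hb, eventually_ge_atTop 1] with n hbn hn
    have : 0 < c * (n : ℝ) ^ (-r) := by positivity
    exact div_nonneg (ha₀ n) (this.le.trans hbn)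
  · filter_upwards [ha, hb, eventually_ge_atTop 1] with n han hbn hn
    have hn0 : (0 : ℝ) < n := by exact_mod_cast hn
    calc a n / b n ≤ C * (n : ℝ) ^ (-(r + 1)) / (c * (n : ℝ) ^ (-r)) :=
          div_le_div₀ ((ha₀ n).trans han) han (by positivity) hbn
      _ = C / c * (n : ℝ)⁻¹ := by
          rw [neg_add, Real.rpow_add hn0, Real.rpow_neg_one]
          field_simp

lemma mem_vcellL_iff_of_two_mul_lt {d k ks : ℕ} {G' : LinMix d k} {G : LinMix d ks}
    {i : Fin k} {j : Fin ks}
    (h : ∀ ℓ, ℓ ≠ j → 2 * ‖ωl G' i - ωl G j‖ < ‖ωl G j - ωl G ℓ‖) (ℓ : Fin ks) :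
    i ∈ vcellL G' G ℓ ↔ ℓ = j := by
  have closer : ∀ ℓ, ℓ ≠ j → ‖ωl G' i - ωl G j‖ < ‖ωl G' i - ωl G ℓ‖ := fun ℓ hℓ => by
    have := norm_sub_le_norm_sub_add_norm_sub (ωl G j) (ωl G' i) (ωl G ℓ)
    rw [norm_sub_rev (ωl G j) (ωl G' i)] at this
    linarith [h ℓ hℓ]
  simp only [vcellL, mem_filter, mem_univ, true_and]
  constructor
  · intro hmem
    by_contra hne
    exact (closer ℓ hne).not_ge (hmem j (Ne.symm hne))
  · rintro rfl
    exact fun ℓ hℓ => (closer ℓ hℓ).le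

namespace LinMix

variable {d k : ℕ}

def gate (G : LinMix d k) (i : Fin k) (x : Fin d → ℝ) : ℝ :=
  Real.exp (qform (G.A i) x + dotp (G.b i) x + G.c i)

def expert (G : LinMix d k) (i : Fin k) (x : Fin d → ℝ) : ℝ :=
  dotp (G.β1 i) x + G.β0 i

lemma gate_pos (G : LinMix d k) (i : Fin k) (x : Fin d → ℝ) : 0 < G.gate i x :=
  Real.exp_pos _

lemma linMoE_eq_centerMass (G : LinMix d k) (x : Fin d → ℝ) :
    linMoE G x = univ.centerMass (G.gate · x) (G.expert · x) := by
  simp only [linMoE, centerMass, gate, expert, smul_eq_mul, mul_sum, div_mul_eq_mul_div,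
    inv_mul_eq_div]

lemma exists_abs_expert_sub_le (G : LinMix d k) (B : ℝ) :
    ∃ M > 0, ∀ x : Fin d → ℝ, ‖x‖ ≤ B → ∀ i j, |G.expert i x - G.expert j x| ≤ M := by
  have hcont : Continuous fun x => ∑ i, ∑ j, |G.expert i x - G.expert j x| := by
    unfold expert dotp; fun_prop
  obtain ⟨C, hC⟩ :=
    (isCompact_closedBall (0 : Fin d → ℝ) B).exists_bound_of_continuousOn hcont.continuousOn
  refine ⟨|C| + 1, by positivity, fun x hx i j => ?_⟩
  calc |G.expert i x - G.expert j x|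
      ≤ ∑ i, ∑ j, |G.expert i x - G.expert j x| :=
        (single_le_sum (f := fun j => |G.expert i x - G.expert j x|) (fun _ _ => abs_nonneg _)
          (mem_univ j)).trans
          (single_le_sum (f := fun i => ∑ j, |G.expert i x - G.expert j x|)
            (fun _ _ => sum_nonneg fun _ _ => abs_nonneg _) (mem_univ i))
    _ ≤ ‖∑ i, ∑ j, |G.expert i x - G.expert j x|‖ := le_abs_self _
    _ ≤ |C| + 1 := (hC x (mem_closedBall_zero_iff.mpr hx)).trans (by linarith [le_abs_self C])

variable {Ns : ℕ}

structure SplitsFirstAtom (G : LinMix d (Ns + 2)) (Gstar : LinMix d (Ns + 1)) (ε η : ℝ) :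
    Prop where
  exp_c_zero : Real.exp (G.c 0) = (Real.exp (Gstar.c 0) + ε) / 2
  exp_c_one : Real.exp (G.c 1) = (Real.exp (Gstar.c 0) + ε) / 2
  A_zero : G.A 0 = Gstar.A 0
  A_one : G.A 1 = Gstar.A 0
  b_zero : G.b 0 = Gstar.b 0
  b_one : G.b 1 = Gstar.b 0
  β1_zero : G.β1 0 = Gstar.β1 0
  β1_one : G.β1 1 = Gstar.β1 0
  β0_zero : G.β0 0 = Gstar.β0 0 + η
  β0_one : G.β0 1 = Gstar.β0 0 - η
  c_succ_succ : ∀ j : Fin Ns, G.c j.succ.succ = Gstar.c j.succ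
  A_succ_succ : ∀ j : Fin Ns, G.A j.succ.succ = Gstar.A j.succ
  b_succ_succ : ∀ j : Fin Ns, G.b j.succ.succ = Gstar.b j.succ
  β1_succ_succ : ∀ j : Fin Ns, G.β1 j.succ.succ = Gstar.β1 j.succ
  β0_succ_succ : ∀ j : Fin Ns, G.β0 j.succ.succ = Gstar.β0 j.succ

namespace SplitsFirstAtom

variable {G : LinMix d (Ns + 2)} {Gstar : LinMix d (Ns + 1)} {ε η : ℝ}

lemma gate_zero (h : G.SplitsFirstAtom Gstar ε η) (x : Fin d → ℝ) :
    G.gate 0 x = (1 + ε / Real.exp (Gstar.c 0)) / 2 * Gstar.gate 0 x := by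
  simp only [gate, Real.exp_add, h.A_zero, h.b_zero, h.exp_c_zero]
  field_simp

lemma gate_one (h : G.SplitsFirstAtom Gstar ε η) (x : Fin d → ℝ) :
    G.gate 1 x = (1 + ε / Real.exp (Gstar.c 0)) / 2 * Gstar.gate 0 x := by
  simp only [gate, Real.exp_add, h.A_one, h.b_one, h.exp_c_one]
  field_simp

/-- The two halves carry the first weight plus `ε`, and their intercept shifts `±η` cancel. -/
lemma linMoE_eq (h : G.SplitsFirstAtom Gstar ε η) (x : Fin d → ℝ) :
    linMoE G x = univ.centerMass
      ((Gstar.gate · x) + Pi.single 0 (ε / Real.exp (Gstar.c 0) * Gstar.gate 0 x))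
      (Gstar.expert · x) := by
  rw [linMoE_eq_centerMass]
  simp only [centerMass, Fin.sum_univ_succ (n := Ns + 1), Fin.sum_univ_succ (n := Ns),
    Fin.succ_zero_eq_one, Pi.add_apply, Pi.single_apply, Fin.succ_ne_zero, if_true, if_false,
    add_zero, smul_eq_mul, h.gate_zero, h.gate_one]
  simp only [gate, expert, h.A_succ_succ, h.b_succ_succ, h.c_succ_succ, h.β1_succ_succ,
    h.β0_succ_succ, h.β1_zero, h.β1_one, h.β0_zero, h.β0_one]
  ring

lemma abs_linMoE_sub_le (h : G.SplitsFirstAtom Gstar ε η) (hε : 0 ≤ ε) {x : Fin d → ℝ}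
    {M : ℝ} (hM : ∀ j, |Gstar.expert 0 x - Gstar.expert j x| ≤ M) :
    |linMoE G x - linMoE Gstar x| ≤ ε / Real.exp (Gstar.c 0) * M := by
  rw [h.linMoE_eq, linMoE_eq_centerMass]
  convert abs_centerMass_add_piSingle_sub_le (z := (Gstar.expert · x))
    (fun j => Gstar.gate_pos j x)
    (mul_nonneg (div_nonneg hε (Real.exp_pos _).le) (Gstar.gate_pos 0 x).le) hM using 2
  field_simp [(Gstar.gate_pos 0 x).ne']

lemma ωl_succ_succ (h : G.SplitsFirstAtom Gstar ε η) (j : Fin Ns) :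
    ωl G j.succ.succ = ωl Gstar j.succ := by
  simp [ωl, h.A_succ_succ, h.b_succ_succ, h.β1_succ_succ, h.β0_succ_succ]

lemma norm_ωl_zero_sub (h : G.SplitsFirstAtom Gstar ε η) : ‖ωl G 0 - ωl Gstar 0‖ = |η| := by
  simp [ωl, h.A_zero, h.b_zero, h.β1_zero, h.β0_zero, Prod.norm_def]

lemma norm_ωl_one_sub (h : G.SplitsFirstAtom Gstar ε η) : ‖ωl G 1 - ωl Gstar 0‖ = |η| := by
  simp [ωl, h.A_one, h.b_one, h.β1_one, h.β0_one, Prod.norm_def]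

lemma succ_succ_mem_vcellL_iff (h : G.SplitsFirstAtom Gstar ε η)
    (hinj : Function.Injective (ωl Gstar)) (j : Fin Ns) (ℓ : Fin (Ns + 1)) :
    j.succ.succ ∈ vcellL G Gstar ℓ ↔ ℓ = j.succ :=
  mem_vcellL_iff_of_two_mul_lt
    (fun ℓ hℓ => by simpa [h.ωl_succ_succ, sub_eq_zero] using hinj.ne hℓ.symm) ℓ

lemma vcellL_zero (h : G.SplitsFirstAtom Gstar ε η) (hinj : Function.Injective (ωl Gstar))
    (hsep : ∀ ℓ, ℓ ≠ 0 → 2 * |η| < ‖ωl Gstar 0 - ωl Gstar ℓ‖) :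
    vcellL G Gstar 0 = {0, 1} := by
  ext i
  induction i using Fin.cases with
  | zero => simp [mem_vcellL_iff_of_two_mul_lt (h.norm_ωl_zero_sub ▸ hsep)]
  | succ i =>
    induction i using Fin.cases with
    | zero => simp [mem_vcellL_iff_of_two_mul_lt (h.norm_ωl_one_sub ▸ hsep)]
    | succ j => simp [h.succ_succ_mem_vcellL_iff hinj, Fin.ext_iff]

lemma vcellL_succ (h : G.SplitsFirstAtom Gstar ε η) (hinj : Function.Injective (ωl Gstar))
    (hsep : ∀ ℓ, ℓ ≠ 0 → 2 * |η| < ‖ωl Gstar 0 - ωl Gstar ℓ‖)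
    (j : Fin Ns) :
    vcellL G Gstar j.succ = {j.succ.succ} := by
  ext i
  induction i using Fin.cases with
  | zero => simp [mem_vcellL_iff_of_two_mul_lt (h.norm_ωl_zero_sub ▸ hsep), Fin.ext_iff]
  | succ i =>
    induction i using Fin.cases with
    | zero => simp [mem_vcellL_iff_of_two_mul_lt (h.norm_ωl_one_sub ▸ hsep), Fin.ext_iff]
    | succ i => simp [h.succ_succ_mem_vcellL_iff hinj, Fin.ext_iff, eq_comm]

lemma lossL2r_eq (h : G.SplitsFirstAtom Gstar ε η) (hinj : Function.Injective (ωl Gstar))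
    (hsep : ∀ ℓ, ℓ ≠ 0 → 2 * |η| < ‖ωl Gstar 0 - ωl Gstar ℓ‖)
    {r : ℝ} (hr : 0 < r) (hε : 0 ≤ ε) :
    lossL2r r G Gstar = ε + (Real.exp (Gstar.c 0) + ε) * |η| ^ r := by
  rw [lossL2r, Fin.sum_univ_succ, Fin.sum_univ_succ (f := fun j => |_ - _|)]
  simp only [h.vcellL_zero hinj hsep, h.vcellL_succ hinj hsep, sum_pair zero_ne_one,
    sum_singleton, h.A_zero, h.A_one, h.b_zero, h.b_one, h.β1_zero, h.β1_one, h.β0_zero, h.β0_one,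
    h.exp_c_zero, h.exp_c_one, h.c_succ_succ, h.A_succ_succ, h.b_succ_succ, h.β1_succ_succ,
    h.β0_succ_succ, sub_self, norm_zero, abs_zero, Real.zero_rpow hr.ne', add_sub_cancel_left,
    sub_sub_cancel_left, abs_neg, sum_const_zero, add_zero, mul_zero]
  rw [add_halves, add_sub_cancel_left, abs_of_nonneg hε]
  ring

end SplitsFirstAtom

end LinMix

/-- **Theorem (the splitting sequence certifies the vanishing ratio).** Let
`G_n` be obtained from `G*` (with `Ns + 1` atoms) by splitting its first atom:
equal halves of the first weight plus `1/(2n^{r+1})`, identical gating and slope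
parameters, intercepts perturbed by `±1/n`, remaining atoms unchanged. Then
(i) eventually `L_{2,r}(G_n, G*) = 1/n^{r+1} + (exp(c*₁)+1/n^{r+1})·(1/n^r)`,
hence `L_{2,r}(G_n, G*) = Θ(n^{−r})`; (ii) `|f_{G_n}(x) − f_{G*}(x)| ≤ C n^{−(r+1)}`
uniformly on the bounded support of `μ`; consequently
`‖f_{G_n} − f_{G*}‖_{L²(μ)} / L_{2,r}(G_n, G*) → 0`. -/
theorem splitting_sequence_ratio_vanishes
    {d Ns : ℕ}
    (μ : Measure (Fin d → ℝ)) [IsProbabilityMeasure μ] (B : ℝ)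
    (hsupp : ∀ᵐ x ∂μ, ‖x‖ ≤ B)
    (Gstar : LinMix d (Ns + 1))
    (hdistinct : Function.Injective (ωl Gstar))
    (r : ℝ) (hr : 1 ≤ r)
    (Gn : ℕ → LinMix d (Ns + 2))
    (hGn : ∀ n : ℕ, 1 ≤ n →
      (Real.exp ((Gn n).c 0) = Real.exp (Gstar.c 0) / 2 + 1 / (2 * (n : ℝ) ^ (r + 1))) ∧
      (Real.exp ((Gn n).c 1) = Real.exp (Gstar.c 0) / 2 + 1 / (2 * (n : ℝ) ^ (r + 1))) ∧
      (Gn n).A 0 = Gstar.A 0 ∧ (Gn n).A 1 = Gstar.A 0 ∧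
      (Gn n).b 0 = Gstar.b 0 ∧ (Gn n).b 1 = Gstar.b 0 ∧
      (Gn n).β1 0 = Gstar.β1 0 ∧ (Gn n).β1 1 = Gstar.β1 0 ∧
      (Gn n).β0 0 = Gstar.β0 0 + 1 / (n : ℝ) ∧
      (Gn n).β0 1 = Gstar.β0 0 - 1 / (n : ℝ) ∧
      ∀ i : Fin (Ns + 2), 2 ≤ (i : ℕ) →
        (Gn n).c i = Gstar.c ⟨(i : ℕ) - 1, by have := i.isLt; omega⟩ ∧
        (Gn n).A i = Gstar.A ⟨(i : ℕ) - 1, by have := i.isLt; omega⟩ ∧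
        (Gn n).b i = Gstar.b ⟨(i : ℕ) - 1, by have := i.isLt; omega⟩ ∧
        (Gn n).β1 i = Gstar.β1 ⟨(i : ℕ) - 1, by have := i.isLt; omega⟩ ∧
        (Gn n).β0 i = Gstar.β0 ⟨(i : ℕ) - 1, by have := i.isLt; omega⟩) :
    (∀ᶠ n : ℕ in atTop,
      lossL2r r (Gn n) Gstar =
        1 / (n : ℝ) ^ (r + 1) +
          (Real.exp (Gstar.c 0) + 1 / (n : ℝ) ^ (r + 1)) * (1 / (n : ℝ) ^ r)) ∧
    (∃ c₁ > (0 : ℝ), ∃ c₂ > (0 : ℝ), ∀ᶠ n : ℕ in atTop,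
      c₁ * (n : ℝ) ^ (-r) ≤ lossL2r r (Gn n) Gstar ∧
      lossL2r r (Gn n) Gstar ≤ c₂ * (n : ℝ) ^ (-r)) ∧
    (∃ C > (0 : ℝ), ∀ n : ℕ, 1 ≤ n → ∀ x : Fin d → ℝ, ‖x‖ ≤ B →
      |linMoE (Gn n) x - linMoE Gstar x| ≤ C * (n : ℝ) ^ (-(r + 1))) ∧
    Tendsto (fun n : ℕ =>
        l2dist μ (linMoE (Gn n)) (linMoE Gstar) / lossL2r r (Gn n) Gstar)
      atTop (nhds 0) := by
  have hsplit : ∀ n : ℕ, 1 ≤ n →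
      (Gn n).SplitsFirstAtom Gstar (1 / (n : ℝ) ^ (r + 1)) (1 / n) := by
    intro n hn
    obtain ⟨hc0, hc1, hA0, hA1, hb0, hb1, hβ10, hβ11, hβ00, hβ01, hrest⟩ := hGn n hn
    have half : Real.exp (Gstar.c 0) / 2 + 1 / (2 * (n : ℝ) ^ (r + 1)) =
        (Real.exp (Gstar.c 0) + 1 / (n : ℝ) ^ (r + 1)) / 2 := by ring
    have two_le (j : Fin Ns) : 2 ≤ ((j.succ.succ : Fin (Ns + 2)) : ℕ) := by simp
    exact ⟨hc0.trans half, hc1.trans half, hA0, hA1, hb0, hb1, hβ10, hβ11, hβ00, hβ01,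
      fun j => (hrest _ (two_le j)).1, fun j => (hrest _ (two_le j)).2.1,
      fun j => (hrest _ (two_le j)).2.2.1, fun j => (hrest _ (two_le j)).2.2.2.1,
      fun j => (hrest _ (two_le j)).2.2.2.2⟩
  have hloss : ∀ᶠ n : ℕ in atTop, lossL2r r (Gn n) Gstar = 1 / (n : ℝ) ^ (r + 1) +
      (Real.exp (Gstar.c 0) + 1 / (n : ℝ) ^ (r + 1)) * (1 / (n : ℝ) ^ r) := by
    filter_upwards [eventually_ge_atTop 1,
      eventually_forall_two_mul_lt_norm_sub hdistinct 0] with n hn hsep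
    rw [(hsplit n hn).lossL2r_eq hdistinct hsep (by linarith) (by positivity),
      abs_of_nonneg (by positivity), Real.div_rpow zero_le_one (Nat.cast_nonneg n), Real.one_rpow]
  have hΘ : ∀ᶠ n : ℕ in atTop,
      Real.exp (Gstar.c 0) * (n : ℝ) ^ (-r) ≤ lossL2r r (Gn n) Gstar ∧
      lossL2r r (Gn n) Gstar ≤ (Real.exp (Gstar.c 0) + 2) * (n : ℝ) ^ (-r) := by
    filter_upwards [hloss, eventually_ge_atTop 1] with n hn_loss hn
    exact hn_loss ▸ mul_rpow_neg_le_and_le_mul_rpow_neg (by linarith) hn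
  obtain ⟨M, hM₀, hM⟩ := Gstar.exists_abs_expert_sub_le B
  set C := M / Real.exp (Gstar.c 0)
  have hpt : ∀ n : ℕ, 1 ≤ n → ∀ x : Fin d → ℝ, ‖x‖ ≤ B →
      |linMoE (Gn n) x - linMoE Gstar x| ≤ C * (n : ℝ) ^ (-(r + 1)) := by
    intro n hn x hx
    convert (hsplit n hn).abs_linMoE_sub_le (by positivity) (fun j => hM x hx 0 j) using 1
    rw [Real.rpow_neg (Nat.cast_nonneg n)]
    ring
  refine ⟨hloss, ⟨_, Real.exp_pos _, _, by positivity, hΘ⟩, ⟨C, by positivity, hpt⟩,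
    tendsto_div_of_le_rpow_of_rpow_le (C := C) (Real.exp_pos _) (fun n => Real.sqrt_nonneg _) ?_
      (hΘ.mono fun _ h => h.1)⟩
  filter_upwards [eventually_ge_atTop 1] with n hn
  exact l2dist_le_of_ae_abs_sub_le (by positivity) (hsupp.mono fun x hx => hpt n hn x hx)
end
end

section
/- (Sup-norm covering number of the quadratic polynomial gating MoE class.) Suppose the expert function h is bounded (|h(x,η)| ≤ M) and Lipschitz in η uniformly in x, Θ is compact, and inputs satisfy ‖x‖ ≤ B. Then there exists a constant C > 0 such that for every τ ∈ (0, 1/2], there is a finite set S ⊆ F_N(Θ) with cardinality |S| ≤ C · τ^{−(d²+d+1+q)N} such that for every f_G ∈ F_N(Θ) there exists g ∈ S with sup_{‖x‖≤B} |f_G(x) − g(x)| ≤ C·τ; i.e., the τ-covering number of F_N(Θ) in the sup norm satisfies N(τ, F_N(Θ), ‖·‖_{L^∞}) ≤ O(τ^{−(d²+d+1+q)N}). -/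
open MeasureTheory Filter Finset

noncomputable section

/-- A mixing measure with `k` atoms for the quadratic polynomial gating MoE
(weights are `exp (c i)`). -/
structure PolyMix (d q k : ℕ) where
  A : Fin k → Fin d → Fin d → ℝ
  b : Fin k → Fin d → ℝ
  c : Fin k → ℝ
  η : Fin k → Fin q → ℝ

/-- The quadratic-polynomial-gated MoE regression function `f_G`. -/
def polyMoE {d q k : ℕ} (h : (Fin d → ℝ) → (Fin q → ℝ) → ℝ) (G : PolyMix d q k)
    (x : Fin d → ℝ) : ℝ :=
  ∑ i, (Real.exp (qform (G.A i) x + dotp (G.b i) x + G.c i) /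
      ∑ j, Real.exp (qform (G.A j) x + dotp (G.b j) x + G.c j)) * h x (G.η i)

/-- All parameters of the mixing measure lie in `Θ`. -/
def inClassP {d q k : ℕ}
    (Θ : Set ((Fin d → Fin d → ℝ) × (Fin d → ℝ) × ℝ × (Fin q → ℝ)))
    (G : PolyMix d q k) : Prop :=
  ∀ i, (G.A i, G.b i, G.c i, G.η i) ∈ Θ

/-! ### Auxiliary lemmas -/

lemma exp_sub_exp_le' {a b R : ℝ} (hba : b ≤ a) (ha : a ≤ R) :
    |Real.exp a - Real.exp b| ≤ Real.exp R * |a - b| := by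
  have h1 : Real.exp a * ((b - a) + 1) ≤ Real.exp a * Real.exp (b - a) := by
    have := Real.add_one_le_exp (b - a)
    nlinarith [Real.exp_pos a]
  rw [← Real.exp_add, show a + (b - a) = b by ring] at h1
  have h2 : Real.exp a - Real.exp b ≤ Real.exp a * (a - b) := by nlinarith
  have h3 : Real.exp a ≤ Real.exp R := Real.exp_le_exp.2 ha
  rw [abs_of_nonneg (by linarith [Real.exp_le_exp.2 hba] : (0:ℝ) ≤ Real.exp a - Real.exp b),
    abs_of_nonneg (by linarith : (0:ℝ) ≤ a - b)]
  nlinarith [Real.exp_pos a]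

lemma exp_sub_exp_le {a b R : ℝ} (ha : |a| ≤ R) (hb : |b| ≤ R) :
    |Real.exp a - Real.exp b| ≤ Real.exp R * |a - b| := by
  rcases le_total b a with hc | hc
  · exact exp_sub_exp_le' hc (le_trans (le_abs_self a) ha)
  · rw [abs_sub_comm, abs_sub_comm a b]
    exact exp_sub_exp_le' hc (le_trans (le_abs_self b) hb)

lemma softmax_diff {k : ℕ} (hk : 1 ≤ k) (s s' H H' : Fin k → ℝ) (R₀ M α β : ℝ)
    (hM : 0 ≤ M) (hα : 0 ≤ α) (hβ : 0 ≤ β)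
    (hs : ∀ i, |s i| ≤ R₀) (hs' : ∀ i, |s' i| ≤ R₀)
    (hH : ∀ i, |H i| ≤ M) (hHd : ∀ i, |H i - H' i| ≤ β)
    (hsd : ∀ i, |s i - s' i| ≤ α) :
    |∑ i, (Real.exp (s i) / ∑ j, Real.exp (s j)) * H i
      - ∑ i, (Real.exp (s' i) / ∑ j, Real.exp (s' j)) * H' i|
      ≤ 2 * M * Real.exp (2 * R₀) * α + β := by
  have hkpos : (0:ℕ) < k := hk
  set E := ∑ j, Real.exp (s j) with hE
  set E' := ∑ j, Real.exp (s' j) with hE'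
  have hne : (Finset.univ : Finset (Fin k)).Nonempty := ⟨⟨0, hkpos⟩, mem_univ _⟩
  have hEpos : 0 < E := Finset.sum_pos (fun j _ => Real.exp_pos _) hne
  have hE'pos : 0 < E' := Finset.sum_pos (fun j _ => Real.exp_pos _) hne
  have hElb : (k : ℝ) * Real.exp (-R₀) ≤ E := by
    calc (k:ℝ) * Real.exp (-R₀) = ∑ _j : Fin k, Real.exp (-R₀) := by
          rw [Finset.sum_const, card_univ, Fintype.card_fin, nsmul_eq_mul]
      _ ≤ E := Finset.sum_le_sum (fun j _ => Real.exp_le_exp.2 (neg_le_of_abs_le (hs j)))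
  have hDe : ∑ i, |Real.exp (s i) - Real.exp (s' i)| ≤ (k:ℝ) * (Real.exp R₀ * α) := by
    calc ∑ i, |Real.exp (s i) - Real.exp (s' i)|
        ≤ ∑ _i : Fin k, Real.exp R₀ * α := Finset.sum_le_sum (fun i _ =>
          le_trans (exp_sub_exp_le (hs i) (hs' i))
            (mul_le_mul_of_nonneg_left (hsd i) (Real.exp_pos _).le))
      _ = (k:ℝ) * (Real.exp R₀ * α) := by
          rw [Finset.sum_const, card_univ, Fintype.card_fin, nsmul_eq_mul]
  have hEE' : |E - E'| ≤ ∑ i, |Real.exp (s i) - Real.exp (s' i)| := by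
    rw [hE, hE', ← Finset.sum_sub_distrib]
    exact Finset.abs_sum_le_sum_abs _ _
  have hw : ∑ i, |Real.exp (s i) / E - Real.exp (s' i) / E'|
      ≤ 2 * Real.exp (2 * R₀) * α := by
    have step : ∀ i, |Real.exp (s i) / E - Real.exp (s' i) / E'|
        ≤ |Real.exp (s i) - Real.exp (s' i)| / E
          + Real.exp (s' i) * |E - E'| / (E * E') := by
      intro i
      have key : Real.exp (s i) / E - Real.exp (s' i) / E'
          = (Real.exp (s i) - Real.exp (s' i)) / E
            + Real.exp (s' i) * (E' - E) / (E * E') := by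
        field_simp
        ring
      rw [key]
      refine le_trans (abs_add_le _ _) ?_
      gcongr
      · rw [abs_div, abs_of_pos hEpos]
      · rw [abs_div, abs_of_pos (mul_pos hEpos hE'pos), abs_mul,
          abs_of_pos (Real.exp_pos _), abs_sub_comm]
    calc ∑ i, |Real.exp (s i) / E - Real.exp (s' i) / E'|
        ≤ ∑ i, (|Real.exp (s i) - Real.exp (s' i)| / E
          + Real.exp (s' i) * |E - E'| / (E * E')) := Finset.sum_le_sum (fun i _ => step i)
      _ = (∑ i, |Real.exp (s i) - Real.exp (s' i)|) / E + |E - E'| / E := by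
          rw [Finset.sum_add_distrib, ← Finset.sum_div]
          congr 1
          rw [← Finset.sum_div]
          rw [show ∑ i, Real.exp (s' i) * |E - E'| = E' * |E - E'| by
            rw [← Finset.sum_mul, ← hE']]
          field_simp
      _ ≤ (∑ i, |Real.exp (s i) - Real.exp (s' i)|) / E
          + (∑ i, |Real.exp (s i) - Real.exp (s' i)|) / E := by gcongr
      _ ≤ ((k:ℝ) * (Real.exp R₀ * α)) / ((k:ℝ) * Real.exp (-R₀))
          + ((k:ℝ) * (Real.exp R₀ * α)) / ((k:ℝ) * Real.exp (-R₀)) := by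
          have hpos : (0:ℝ) < (k:ℝ) * Real.exp (-R₀) :=
            mul_pos (by exact_mod_cast hkpos) (Real.exp_pos _)
          gcongr
      _ = 2 * Real.exp (2 * R₀) * α := by
          have hkne : ((k:ℝ)) ≠ 0 := by positivity
          rw [mul_div_mul_left _ _ hkne]
          have hkey : Real.exp R₀ * α / Real.exp (-R₀) = Real.exp (2 * R₀) * α := by
            rw [Real.exp_neg, div_eq_mul_inv, inv_inv,
              show (2:ℝ) * R₀ = R₀ + R₀ by ring, Real.exp_add]
            ring
          rw [hkey]; ring
  calc |∑ i, (Real.exp (s i) / E) * H i - ∑ i, (Real.exp (s' i) / E') * H' i|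
      = |∑ i, ((Real.exp (s i) / E) * H i - (Real.exp (s' i) / E') * H' i)| := by
        rw [Finset.sum_sub_distrib]
    _ ≤ ∑ i, |(Real.exp (s i) / E) * H i - (Real.exp (s' i) / E') * H' i| :=
        Finset.abs_sum_le_sum_abs _ _
    _ ≤ ∑ i, (|Real.exp (s i) / E - Real.exp (s' i) / E'| * M
          + (Real.exp (s' i) / E') * β) := by
        refine Finset.sum_le_sum (fun i _ => ?_)
        have key : (Real.exp (s i) / E) * H i - (Real.exp (s' i) / E') * H' i
            = (Real.exp (s i) / E - Real.exp (s' i) / E') * H i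
              + (Real.exp (s' i) / E') * (H i - H' i) := by ring
        rw [key]
        refine le_trans (abs_add_le _ _) ?_
        gcongr
        · rw [abs_mul]
          exact mul_le_mul_of_nonneg_left (hH i) (abs_nonneg _)
        · rw [abs_mul, abs_of_nonneg (by positivity : (0:ℝ) ≤ Real.exp (s' i) / E')]
          exact mul_le_mul_of_nonneg_left (hHd i) (by positivity)
    _ = (∑ i, |Real.exp (s i) / E - Real.exp (s' i) / E'|) * M
          + (∑ i, Real.exp (s' i) / E') * β := by
        rw [Finset.sum_add_distrib, Finset.sum_mul, Finset.sum_mul]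
    _ ≤ (2 * Real.exp (2 * R₀) * α) * M + 1 * β := by
        gcongr
        rw [← Finset.sum_div, ← hE', div_self hE'pos.ne']
    _ = 2 * M * Real.exp (2 * R₀) * α + β := by ring

lemma qform_sub {d : ℕ} (A A' : Fin d → Fin d → ℝ) (x : Fin d → ℝ) :
    qform (fun u v => A u v - A' u v) x = qform A x - qform A' x := by
  simp only [qform, sub_mul, Finset.sum_sub_distrib]

lemma dotp_sub {d : ℕ} (b b' x : Fin d → ℝ) :
    dotp (fun u => b u - b' u) x = dotp b x - dotp b' x := by
  simp only [dotp, sub_mul, Finset.sum_sub_distrib]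

lemma score_sub {d : ℕ} (A A' : Fin d → Fin d → ℝ) (b b' x : Fin d → ℝ) (c c' : ℝ) :
    (qform A x + dotp b x + c) - (qform A' x + dotp b' x + c')
      = qform (fun u v => A u v - A' u v) x + dotp (fun u => b u - b' u) x + (c - c') := by
  rw [qform_sub, dotp_sub]; ring

lemma score_abs_le {d : ℕ} {a B' : ℝ} (ha : 0 ≤ a) (hB : 0 ≤ B')
    (A : Fin d → Fin d → ℝ) (b x : Fin d → ℝ) (c : ℝ)
    (hA : ∀ u v, |A u v| ≤ a) (hb : ∀ u, |b u| ≤ a) (hc : |c| ≤ a)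
    (hx : ∀ u, |x u| ≤ B') :
    |qform A x + dotp b x + c| ≤ a * ((d:ℝ)^2 * B'^2 + d * B' + 1) := by
  have hq : |qform A x| ≤ (d:ℝ)^2 * (a * B'^2) := by
    calc |qform A x| ≤ ∑ u, |∑ v, A u v * x u * x v| := Finset.abs_sum_le_sum_abs _ _
      _ ≤ ∑ u : Fin d, ∑ v : Fin d, |A u v * x u * x v| :=
          Finset.sum_le_sum (fun u _ => Finset.abs_sum_le_sum_abs _ _)
      _ ≤ ∑ _u : Fin d, ∑ _v : Fin d, a * B'^2 := by
          refine Finset.sum_le_sum (fun u _ => Finset.sum_le_sum (fun v _ => ?_))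
          rw [abs_mul, abs_mul]
          calc |A u v| * |x u| * |x v| ≤ a * B' * B' := by
                have h0 := abs_nonneg (A u v); have h1 := abs_nonneg (x u)
                have h2 := abs_nonneg (x v)
                gcongr <;> first | exact hA u v | exact hx u | exact hx v
            _ = a * B'^2 := by ring
      _ = (d:ℝ)^2 * (a * B'^2) := by
          simp [Finset.sum_const, card_univ]
          ring
  have hd : |dotp b x| ≤ (d:ℝ) * (a * B') := by
    calc |dotp b x| ≤ ∑ u : Fin d, |b u * x u| := Finset.abs_sum_le_sum_abs _ _
      _ ≤ ∑ _u : Fin d, a * B' := by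
          refine Finset.sum_le_sum (fun u _ => ?_)
          rw [abs_mul]
          have h0 := abs_nonneg (b u)
          gcongr <;> first | exact hb u | exact hx u
      _ = (d:ℝ) * (a * B') := by simp [Finset.sum_const, card_univ]
  calc |qform A x + dotp b x + c| ≤ |qform A x| + |dotp b x| + |c| := by
        exact le_trans (abs_add_le _ _) (by gcongr; exact abs_add_le _ _)
    _ ≤ (d:ℝ)^2 * (a * B'^2) + (d:ℝ) * (a * B') + a := by gcongr
    _ = a * ((d:ℝ)^2 * B'^2 + d * B' + 1) := by ring

lemma real_grid (R ε : ℝ) (hR : 0 ≤ R) (hε : 0 < ε) (hε1 : ε ≤ 1) :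
    ∃ T : Finset ℝ, (T.card : ℝ) ≤ (2*R+3)/ε ∧ ∀ r, |r| ≤ R → ∃ t ∈ T, |r - t| ≤ ε := by
  set n : ℤ := ⌈R/ε⌉ with hn
  have hn0 : 0 ≤ n := Int.ceil_nonneg (by positivity)
  have hnR : (n : ℝ) ≤ R/ε + 1 := le_of_lt (Int.ceil_lt_add_one _)
  refine ⟨(Finset.Icc (-n) n).image (fun z : ℤ => (z:ℝ) * ε), ?_, ?_⟩
  · have h1 : ((Finset.Icc (-n) n).image (fun z : ℤ => (z:ℝ) * ε)).card
        ≤ (Finset.Icc (-n) n).card := Finset.card_image_le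
    have h2 : ((Finset.Icc (-n) n).card : ℤ) = 2*n + 1 := by
      rw [Int.card_Icc]
      omega
    have h3 : (((Finset.Icc (-n) n).card : ℤ) : ℝ) = 2*(n:ℝ) + 1 := by
      rw [h2]; push_cast; ring
    have h4 : (((Finset.Icc (-n) n).image (fun z : ℤ => (z:ℝ) * ε)).card : ℝ)
        ≤ 2*(n:ℝ) + 1 := by
      rw [← h3]; exact_mod_cast h1
    have h5 : 2*(n:ℝ) + 1 ≤ 2*R/ε + 3 := by
      rw [mul_div_assoc]
      linarith
    have h6 : 2*R/ε + 3 ≤ (2*R+3)/ε := by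
      rw [add_div]
      have : (3:ℝ) ≤ 3/ε := by
        rw [le_div_iff₀ hε]; linarith
      linarith
    linarith
  · intro r hr
    have hrR : r ≤ R := le_trans (le_abs_self r) hr
    have hrR' : -R ≤ r := neg_le_of_abs_le hr
    refine ⟨(⌊r/ε⌋ : ℝ) * ε, ?_, ?_⟩
    · refine Finset.mem_image.2 ⟨⌊r/ε⌋, ?_, rfl⟩
      rw [Finset.mem_Icc]
      constructor
      · rw [hn, ← Int.floor_neg]
        refine Int.floor_le_floor ?_
        rw [← neg_div]
        gcongr
      · refine le_trans (Int.floor_le_ceil _) (Int.ceil_le_ceil ?_)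
        gcongr
    · have hf1 : (⌊r/ε⌋ : ℝ) ≤ r/ε := Int.floor_le _
      have hf2 : r/ε < (⌊r/ε⌋ : ℝ) + 1 := Int.lt_floor_add_one _
      have e1 : (⌊r/ε⌋ : ℝ) * ε ≤ r := (le_div_iff₀ hε).1 hf1
      have e2 : r < ((⌊r/ε⌋ : ℝ) + 1) * ε := (div_lt_iff₀ hε).1 hf2
      rw [abs_le]
      constructor <;> nlinarith

/-- coordinatewise closeness of parameters -/
def clP {d q : ℕ} (ε : ℝ) (θ p : (Fin d → Fin d → ℝ) × (Fin d → ℝ) × ℝ × (Fin q → ℝ)) : Prop :=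
  (∀ u v, |θ.1 u v - p.1 u v| ≤ ε) ∧ (∀ u, |θ.2.1 u - p.2.1 u| ≤ ε) ∧
    (|θ.2.2.1 - p.2.2.1| ≤ ε) ∧ (∀ l, |θ.2.2.2 l - p.2.2.2 l| ≤ ε)

lemma param_net {d q : ℕ} (Θ : Set ((Fin d → Fin d → ℝ) × (Fin d → ℝ) × ℝ × (Fin q → ℝ)))
    (R : ℝ) (hR : 0 ≤ R)
    (hb : ∀ θ ∈ Θ, (∀ u v, |θ.1 u v| ≤ R) ∧ (∀ u, |θ.2.1 u| ≤ R) ∧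
      (|θ.2.2.1| ≤ R) ∧ (∀ l, |θ.2.2.2 l| ≤ R))
    (ε : ℝ) (hε : 0 < ε) (hε1 : ε ≤ 1) :
    ∃ P : Finset ((Fin d → Fin d → ℝ) × (Fin d → ℝ) × ℝ × (Fin q → ℝ)),
      (P.card : ℝ) ≤ ((2*R+3)/ε) ^ (d*d + d + 1 + q) ∧
      (∀ p ∈ P, p ∈ Θ) ∧
      (∀ θ ∈ Θ, ∃ p ∈ P, clP (2*ε) θ p) := by
  classical
  obtain ⟨T, hTcard, hTcov⟩ := real_grid R ε hR hε hε1
  set grid : Finset ((Fin d → Fin d → ℝ) × (Fin d → ℝ) × ℝ × (Fin q → ℝ)) :=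
    (Fintype.piFinset fun _ : Fin d => Fintype.piFinset fun _ : Fin d => T) ×ˢ
      ((Fintype.piFinset fun _ : Fin d => T) ×ˢ (T ×ˢ Fintype.piFinset fun _ : Fin q => T))
      with hgrid
  have hgcard : (grid.card : ℝ) ≤ ((2*R+3)/ε) ^ (d*d + d + 1 + q) := by
    have hT0 : (0:ℝ) ≤ (T.card : ℝ) := Nat.cast_nonneg _
    have h1 : grid.card = (T.card ^ d) ^ d * (T.card ^ d * (T.card * T.card ^ q)) := by
      rw [hgrid, Finset.card_product, Finset.card_product, Finset.card_product,
        Fintype.card_piFinset_const, Fintype.card_piFinset_const,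
        Fintype.card_piFinset_const]
    have h2 : (grid.card : ℝ) = (T.card : ℝ) ^ (d*d + d + 1 + q) := by
      rw [h1]; push_cast; ring
    rw [h2]
    exact pow_le_pow_left₀ hT0 hTcard _
  have hcov : ∀ θ ∈ Θ, ∃ p ∈ grid, clP ε θ p := by
    intro θ hθ
    obtain ⟨hA, hbb, hc, hη⟩ := hb θ hθ
    choose pA hpA1 hpA2 using fun u v => hTcov (θ.1 u v) (hA u v)
    choose pb hpb1 hpb2 using fun u => hTcov (θ.2.1 u) (hbb u)
    obtain ⟨pc, hpc1, hpc2⟩ := hTcov θ.2.2.1 hc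
    choose pη hpη1 hpη2 using fun l => hTcov (θ.2.2.2 l) (hη l)
    refine ⟨(pA, pb, pc, pη), ?_, ?_⟩
    · rw [hgrid]
      refine Finset.mem_product.2 ⟨?_, Finset.mem_product.2 ⟨?_, Finset.mem_product.2 ⟨?_, ?_⟩⟩⟩
      · exact Fintype.mem_piFinset.2 fun u => Fintype.mem_piFinset.2 fun v => hpA1 u v
      · exact Fintype.mem_piFinset.2 fun u => hpb1 u
      · exact hpc1
      · exact Fintype.mem_piFinset.2 fun l => hpη1 l
    · exact ⟨hpA2, hpb2, hpc2, hpη2⟩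
  set pick : ((Fin d → Fin d → ℝ) × (Fin d → ℝ) × ℝ × (Fin q → ℝ)) →
      ((Fin d → Fin d → ℝ) × (Fin d → ℝ) × ℝ × (Fin q → ℝ)) := fun p =>
    if h : ∃ θ ∈ Θ, clP ε θ p then h.choose else p with hpick
  refine ⟨(grid.filter (fun p => ∃ θ ∈ Θ, clP ε θ p)).image pick, ?_, ?_, ?_⟩
  · refine le_trans ?_ hgcard
    exact_mod_cast le_trans Finset.card_image_le (Finset.card_filter_le _ _)
  · intro p hp
    obtain ⟨p', hp', rfl⟩ := Finset.mem_image.1 hp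
    have hcond := (Finset.mem_filter.1 hp').2
    rw [hpick]
    simp only [dif_pos hcond]
    exact hcond.choose_spec.1
  · intro θ hθ
    obtain ⟨p, hpg, hcl⟩ := hcov θ hθ
    have hcond : ∃ θ' ∈ Θ, clP ε θ' p := ⟨θ, hθ, hcl⟩
    refine ⟨pick p, Finset.mem_image.2 ⟨p, Finset.mem_filter.2 ⟨hpg, hcond⟩, rfl⟩, ?_⟩
    have hps := hcond.choose_spec
    have hpe : pick p = hcond.choose := by rw [hpick]; simp only [dif_pos hcond]
    rw [hpe]
    obtain ⟨h1, h2, h3, h4⟩ := hcl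
    obtain ⟨g1, g2, g3, g4⟩ := hps.2
    refine ⟨fun u v => ?_, fun u => ?_, ?_, fun l => ?_⟩
    · calc |θ.1 u v - hcond.choose.1 u v|
          ≤ |θ.1 u v - p.1 u v| + |p.1 u v - hcond.choose.1 u v| := abs_sub_le _ _ _
        _ ≤ ε + ε := add_le_add (h1 u v) (by rw [abs_sub_comm]; exact g1 u v)
        _ = 2*ε := by ring
    · calc |θ.2.1 u - hcond.choose.2.1 u|
          ≤ |θ.2.1 u - p.2.1 u| + |p.2.1 u - hcond.choose.2.1 u| := abs_sub_le _ _ _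
        _ ≤ ε + ε := add_le_add (h2 u) (by rw [abs_sub_comm]; exact g2 u)
        _ = 2*ε := by ring
    · calc |θ.2.2.1 - hcond.choose.2.2.1|
          ≤ |θ.2.2.1 - p.2.2.1| + |p.2.2.1 - hcond.choose.2.2.1| := abs_sub_le _ _ _
        _ ≤ ε + ε := add_le_add h3 (by rw [abs_sub_comm]; exact g3)
        _ = 2*ε := by ring
    · calc |θ.2.2.2 l - hcond.choose.2.2.2 l|
          ≤ |θ.2.2.2 l - p.2.2.2 l| + |p.2.2.2 l - hcond.choose.2.2.2 l| := abs_sub_le _ _ _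
        _ ≤ ε + ε := add_le_add (h4 l) (by rw [abs_sub_comm]; exact g4 l)
        _ = 2*ε := by ring

/-- **Theorem (sup-norm covering number of the MoE class `F_N(Θ)`).** If the
expert function is bounded and Lipschitz in `η` uniformly in `x`, `Θ` is
compact and `‖x‖ ≤ B`, then for every `τ ∈ (0, 1/2]` the class `F_N(Θ)` admits
a `(C·τ)`-cover (in the sup norm on the ball of radius `B`) by members of
`F_N(Θ)` of cardinality at most `C · τ^{−(d²+d+1+q)N}`. -/
theorem poly_moe_covering_number
    {d q N : ℕ} (h : (Fin d → ℝ) → (Fin q → ℝ) → ℝ) (M L B : ℝ)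
    (hbd : ∀ (x : Fin d → ℝ) (η : Fin q → ℝ), |h x η| ≤ M)
    (hLip : ∀ (x : Fin d → ℝ) (η₁ η₂ : Fin q → ℝ), |h x η₁ - h x η₂| ≤ L * ‖η₁ - η₂‖)
    (Θ : Set ((Fin d → Fin d → ℝ) × (Fin d → ℝ) × ℝ × (Fin q → ℝ)))
    (hΘ : IsCompact Θ) (hN : 1 ≤ N) :
    ∃ C > 0, ∀ τ : ℝ, 0 < τ → τ ≤ 1 / 2 →
      ∃ S : Finset ((Fin d → ℝ) → ℝ),
        (∀ g ∈ S, ∃ k : ℕ, 1 ≤ k ∧ k ≤ N ∧ ∃ G : PolyMix d q k,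
          inClassP Θ G ∧ g = polyMoE h G) ∧
        (S.card : ℝ) ≤ C * τ ^ (-(((d ^ 2 + d + 1 + q) * N : ℕ) : ℝ)) ∧
        ∀ k : ℕ, 1 ≤ k → k ≤ N → ∀ G : PolyMix d q k, inClassP Θ G →
          ∃ g ∈ S, ∀ x : Fin d → ℝ, ‖x‖ ≤ B → |polyMoE h G x - g x| ≤ C * τ := by
  classical
  -- boundedness of Θ, coordinatewise
  obtain ⟨R0, hR0⟩ := isBounded_iff_forall_norm_le.1 hΘ.isBounded
  set R := max R0 0 with hRdef
  have hR : 0 ≤ R := le_max_right _ _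
  have hbnd : ∀ θ ∈ Θ, (∀ u v, |θ.1 u v| ≤ R) ∧ (∀ u, |θ.2.1 u| ≤ R) ∧
      (|θ.2.2.1| ≤ R) ∧ (∀ l, |θ.2.2.2 l| ≤ R) := by
    intro θ hθ
    have hn : ‖θ‖ ≤ R := le_trans (hR0 θ hθ) (le_max_left _ _)
    have hA : ‖θ.1‖ ≤ R := le_trans (norm_fst_le θ) hn
    have h2 : ‖θ.2‖ ≤ R := le_trans (norm_snd_le θ) hn
    have hbv : ‖θ.2.1‖ ≤ R := le_trans (norm_fst_le θ.2) h2
    have h22 : ‖θ.2.2‖ ≤ R := le_trans (norm_snd_le θ.2) h2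
    have hcv : ‖θ.2.2.1‖ ≤ R := le_trans (norm_fst_le θ.2.2) h22
    have hηv : ‖θ.2.2.2‖ ≤ R := le_trans (norm_snd_le θ.2.2) h22
    refine ⟨fun u v => ?_, fun u => ?_, ?_, fun l => ?_⟩
    · rw [← Real.norm_eq_abs]
      exact le_trans (norm_le_pi_norm (θ.1 u) v) (le_trans (norm_le_pi_norm θ.1 u) hA)
    · rw [← Real.norm_eq_abs]
      exact le_trans (norm_le_pi_norm θ.2.1 u) hbv
    · rw [← Real.norm_eq_abs]; exact hcv
    · rw [← Real.norm_eq_abs]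
      exact le_trans (norm_le_pi_norm θ.2.2.2 l) hηv
  -- constants
  set B' := max B 0 with hB'def
  have hB' : 0 ≤ B' := le_max_right _ _
  set K₁ : ℝ := (d:ℝ)^2 * B'^2 + (d:ℝ) * B' + 1 with hK₁def
  have hK₁ : 0 < K₁ := by positivity
  set R₀ : ℝ := R * K₁ with hR₀def
  have hM0 : 0 ≤ M := le_trans (abs_nonneg _) (hbd (fun _ => 0) (fun _ => 0))
  set C₂ : ℝ := 4 * M * Real.exp (2*R₀) * K₁ + 2 * |L| with hC₂def
  have hC₂ : 0 ≤ C₂ := by positivity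
  set Dn : ℕ := (d^2 + d + 1 + q) * N with hDndef
  set C : ℝ := max C₂ ((N:ℝ) * (2*R+3)^Dn) + 1 with hCdef
  have hCmax : 0 ≤ max C₂ ((N:ℝ) * (2*R+3)^Dn) := le_trans hC₂ (le_max_left _ _)
  have hCpos : 0 < C := by rw [hCdef]; linarith
  refine ⟨C, hCpos, ?_⟩
  intro τ hτ hτ2
  have hτ1 : τ ≤ 1 := by linarith
  obtain ⟨P, hPcard, hPmem, hPcov⟩ := param_net Θ R hR hbnd τ hτ hτ1
  set mk := fun (k : ℕ) (t : Fin k → ((Fin d → Fin d → ℝ) × (Fin d → ℝ) × ℝ × (Fin q → ℝ))) =>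
    (⟨fun i => (t i).1, fun i => (t i).2.1, fun i => (t i).2.2.1, fun i => (t i).2.2.2⟩ :
      PolyMix d q k) with hmk
  set S : Finset ((Fin d → ℝ) → ℝ) := (Finset.Icc 1 N).biUnion
    (fun k => (Fintype.piFinset fun _ : Fin k => P).image (fun t => polyMoE h (mk k t)))
    with hS
  refine ⟨S, ?_, ?_, ?_⟩
  · -- members of S lie in the class
    intro g hg
    obtain ⟨k, hk, hg2⟩ := Finset.mem_biUnion.1 hg
    obtain ⟨t, ht, rfl⟩ := Finset.mem_image.1 hg2
    rw [Finset.mem_Icc] at hk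
    exact ⟨k, hk.1, hk.2, mk k t,
      fun i => hPmem (t i) (Fintype.mem_piFinset.1 ht i), rfl⟩
  · -- cardinality bound
    have hstep : ∀ k ∈ Finset.Icc 1 N,
        ((Fintype.piFinset fun _ : Fin k => P).image (fun t => polyMoE h (mk k t))).card
          ≤ P.card ^ N := by
      intro k hk
      rw [Finset.mem_Icc] at hk
      refine le_trans Finset.card_image_le ?_
      rw [Fintype.card_piFinset_const]
      rcases Nat.eq_zero_or_pos P.card with h0 | h1
      · rw [h0, Nat.zero_pow (by omega), Nat.zero_pow (by omega)]
      · exact Nat.pow_le_pow_right h1 hk.2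
    have hcard1 : S.card ≤ N * P.card ^ N := by
      refine le_trans Finset.card_biUnion_le ?_
      refine le_trans (Finset.sum_le_sum hstep) ?_
      rw [Finset.sum_const, smul_eq_mul, Nat.card_Icc]
      exact Nat.mul_le_mul_right _ (by omega)
    have hcast : (S.card : ℝ) ≤ (N:ℝ) * ((P.card:ℝ))^N := by exact_mod_cast hcard1
    have hP' : ((P.card:ℝ))^N ≤ (((2*R+3)/τ) ^ (d*d + d + 1 + q))^N :=
      pow_le_pow_left₀ (Nat.cast_nonneg _) hPcard N
    have hDd : (d*d + d + 1 + q) * N = Dn := by rw [hDndef, pow_two]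
    have hcomb : (((2*R+3)/τ) ^ (d*d + d + 1 + q))^N = ((2*R+3)/τ)^Dn := by
      rw [← pow_mul, hDd]
    have hsplit : ((2*R+3)/τ)^Dn = (2*R+3)^Dn * (τ^Dn)⁻¹ := by
      rw [div_pow, div_eq_mul_inv]
    have hrpow : τ ^ (-(((d ^ 2 + d + 1 + q) * N : ℕ) : ℝ)) = (τ^Dn)⁻¹ := by
      rw [← hDndef, Real.rpow_neg hτ.le, Real.rpow_natCast]
    rw [hrpow]
    have hinvpos : 0 < (τ^Dn)⁻¹ := by positivity
    calc (S.card : ℝ) ≤ (N:ℝ) * ((P.card:ℝ))^N := hcast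
      _ ≤ (N:ℝ) * ((2*R+3)^Dn * (τ^Dn)⁻¹) := by
          rw [← hsplit, ← hcomb]
          exact mul_le_mul_of_nonneg_left hP' (Nat.cast_nonneg _)
      _ = ((N:ℝ) * (2*R+3)^Dn) * (τ^Dn)⁻¹ := by ring
      _ ≤ C * (τ^Dn)⁻¹ := by
          refine mul_le_mul_of_nonneg_right ?_ hinvpos.le
          rw [hCdef]
          exact le_trans (le_max_right _ _) (by linarith)
  · -- covering property
    intro k hk1 hk2 G hG
    choose p hpP hpcl using fun i => hPcov _ (hG i)
    refine ⟨polyMoE h (mk k p), Finset.mem_biUnion.2 ⟨k, Finset.mem_Icc.2 ⟨hk1, hk2⟩,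
      Finset.mem_image.2 ⟨p, Fintype.mem_piFinset.2 hpP, rfl⟩⟩, ?_⟩
    intro x hx
    have hxc : ∀ u, |x u| ≤ B' := fun u => le_trans
      (by rw [← Real.norm_eq_abs]; exact norm_le_pi_norm x u)
      (le_trans hx (le_max_left _ _))
    have hsG : ∀ i, |qform (G.A i) x + dotp (G.b i) x + G.c i| ≤ R₀ := by
      intro i
      obtain ⟨c1, c2, c3, c4⟩ := hbnd _ (hG i)
      exact score_abs_le hR hB' _ _ _ _ c1 c2 c3 hxc
    have hsP : ∀ i, |qform ((p i).1) x + dotp ((p i).2.1) x + (p i).2.2.1| ≤ R₀ := by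
      intro i
      obtain ⟨c1, c2, c3, c4⟩ := hbnd _ (hPmem (p i) (hpP i))
      exact score_abs_le hR hB' _ _ _ _ c1 c2 c3 hxc
    have hsd : ∀ i, |(qform (G.A i) x + dotp (G.b i) x + G.c i)
        - (qform ((p i).1) x + dotp ((p i).2.1) x + (p i).2.2.1)| ≤ (2*τ)*K₁ := by
      intro i
      rw [score_sub]
      obtain ⟨c1, c2, c3, c4⟩ := hpcl i
      exact score_abs_le (by positivity) hB' _ _ _ _ c1 c2 c3 hxc
    have hβ : ∀ i, |h x (G.η i) - h x ((p i).2.2.2)| ≤ |L| * (2*τ) := by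
      intro i
      refine le_trans (hLip x _ _) ?_
      have hnη : ‖G.η i - (p i).2.2.2‖ ≤ 2*τ := by
        refine (pi_norm_le_iff_of_nonneg (by positivity)).2 fun l => ?_
        rw [Pi.sub_apply, Real.norm_eq_abs]
        exact (hpcl i).2.2.2 l
      calc L * ‖G.η i - (p i).2.2.2‖ ≤ |L| * ‖G.η i - (p i).2.2.2‖ :=
            mul_le_mul_of_nonneg_right (le_abs_self L) (norm_nonneg _)
        _ ≤ |L| * (2*τ) := mul_le_mul_of_nonneg_left hnη (abs_nonneg _)
    have key := softmax_diff hk1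
      (fun i => qform (G.A i) x + dotp (G.b i) x + G.c i)
      (fun i => qform ((p i).1) x + dotp ((p i).2.1) x + (p i).2.2.1)
      (fun i => h x (G.η i)) (fun i => h x ((p i).2.2.2))
      R₀ M ((2*τ)*K₁) (|L| * (2*τ))
      hM0 (by positivity) (by positivity) hsG hsP (fun i => hbd x _) hβ hsd
    calc |polyMoE h G x - polyMoE h (mk k p) x|
        ≤ 2 * M * Real.exp (2 * R₀) * ((2*τ)*K₁) + |L| * (2*τ) := key
      _ = C₂ * τ := by rw [hC₂def]; ring
      _ ≤ C * τ := by
          refine mul_le_mul_of_nonneg_right ?_ hτ.le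
          rw [hCdef]
          exact le_trans (le_max_left _ _) (by linarith)
end
end

section
/- (Bracketing entropy of the quadratic polynomial gating MoE class.) Suppose the expert function h is bounded and Lipschitz in η uniformly in x, Θ is compact, and μ is a probability distribution on ℝ^d with bounded support. Then there exist constants C, C' > 0 such that for every ε ∈ (0, 1/2] there exist k ≤ (C/ε)^{C'} pairs of functions (L_i, U_i), i = 1,…,k, with L_i ≤ U_i pointwise and ‖U_i − L_i‖_{L²(μ)} ≤ ε, such that every f_G ∈ F_N(Θ) satisfies L_i ≤ f_G ≤ U_i pointwise for some i; equivalently, the L²(μ) bracketing entropy satisfies H_B(ε, F_N(Θ), ‖·‖_{L²(μ)}) ≲ log(1/ε). -/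
open MeasureTheory Filter Finset

noncomputable section

/-- `L²(μ)` norm of a function. -/
def l2norm {d : ℕ} (μ : Measure (Fin d → ℝ)) (f : (Fin d → ℝ) → ℝ) : ℝ :=
  Real.sqrt (∫ x, f x ^ 2 ∂μ)

/-!
On the ball `‖x‖ ≤ B` carrying `μ`, the gating scores of parameters in the bounded set `Θ` are
bounded, so the softmax weights, and with them `f_G`, are Lipschitz in the parameters. A grid of
mesh `δ ≍ ε` in the parameter box has `(C/ε)^{O(1)}` points; the functions `g` it produces are
bracket centres, `[g - ε/2, g + ε/2]` on the ball and `[-M, M]` off it, of `L²(μ)`-width `ε`.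
-/

open Real

def HasNetsOfDim (E : Type*) [SeminormedAddCommGroup E] (D : ℕ) : Prop :=
  ∀ ⦃R δ : ℝ⦄, 0 ≤ R → 0 < δ → ∃ S : Finset E, (S.card : ℝ) ≤ (2 * R / δ + 1) ^ D ∧
    (∀ y ∈ S, ‖y‖ ≤ R) ∧ ∀ x, ‖x‖ ≤ R → ∃ y ∈ S, ‖x - y‖ ≤ δ

section Nets

variable {E F : Type*} [SeminormedAddCommGroup E] [SeminormedAddCommGroup F]

lemma hasNetsOfDim_real : HasNetsOfDim ℝ 1 := by
  intro R δ hR hδ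
  set n := ⌊2 * R / δ⌋₊
  refine ⟨(range (n + 1)).image fun j : ℕ => -R + j * δ, ?_, ?_, ?_⟩
  · calc ((range (n + 1)).image fun j : ℕ => -R + j * δ).card ≤ (n : ℝ) + 1 := by
          exact_mod_cast card_image_le.trans (card_range _).le
      _ ≤ (2 * R / δ + 1) ^ 1 := by
          rw [pow_one]; gcongr; exact Nat.floor_le (by positivity)
  · simp only [mem_image, mem_range, forall_exists_index, and_imp, forall_apply_eq_imp_iff₂]
    intro j hj
    have hjδ : (j : ℝ) * δ ≤ 2 * R := by
      rw [← le_div_iff₀ hδ]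
      exact (Nat.cast_le.2 (Nat.lt_succ_iff.1 hj)).trans (Nat.floor_le (by positivity))
    rw [Real.norm_eq_abs, abs_le]
    constructor <;> nlinarith [Nat.cast_nonneg (α := ℝ) j]
  · intro x hx
    rw [Real.norm_eq_abs, abs_le] at hx
    have hxR : 0 ≤ (x + R) / δ := div_nonneg (by linarith) hδ.le
    refine ⟨-R + ⌊(x + R) / δ⌋₊ * δ, mem_image_of_mem _ (mem_range.2 (Nat.lt_succ_iff.2 ?_)), ?_⟩
    · exact Nat.floor_le_floor (by gcongr; linarith)
    · have hlo := Nat.floor_le hxR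
      have hhi := Nat.lt_floor_add_one ((x + R) / δ)
      rw [le_div_iff₀ hδ] at hlo
      rw [div_lt_iff₀ hδ] at hhi
      rw [Real.norm_eq_abs, abs_le]
      constructor <;> nlinarith

lemma HasNetsOfDim.pi {ι : Type*} [Fintype ι] [DecidableEq ι] {D : ℕ} (hE : HasNetsOfDim E D) :
    HasNetsOfDim (ι → E) (Fintype.card ι * D) := by
  intro R δ hR hδ
  obtain ⟨S, hS_card, hS_mem, hS_cover⟩ := hE hR hδ
  refine ⟨Fintype.piFinset fun _ => S, ?_, fun y hy => ?_, fun x hx => ?_⟩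
  · rw [Fintype.card_piFinset, prod_const, card_univ, pow_mul']
    push_cast
    gcongr
  · exact (pi_norm_le_iff_of_nonneg hR).2 fun i => hS_mem _ (Fintype.mem_piFinset.1 hy i)
  · choose y hyS hy using fun i => hS_cover (x i) ((norm_le_pi_norm x i).trans hx)
    exact ⟨y, Fintype.mem_piFinset.2 hyS, (pi_norm_le_iff_of_nonneg hδ.le).2 hy⟩

lemma HasNetsOfDim.prod {D D' : ℕ} (hE : HasNetsOfDim E D) (hF : HasNetsOfDim F D') :
    HasNetsOfDim (E × F) (D + D') := by
  intro R δ hR hδ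
  obtain ⟨S, hS_card, hS_mem, hS_cover⟩ := hE hR hδ
  obtain ⟨T, hT_card, hT_mem, hT_cover⟩ := hF hR hδ
  refine ⟨S ×ˢ T, ?_, fun y hy => ?_, fun x hx => ?_⟩
  · rw [card_product, pow_add]
    push_cast
    gcongr
  · rw [mem_product] at hy
    exact norm_prod_le_iff.2 ⟨hS_mem _ hy.1, hT_mem _ hy.2⟩
  · obtain ⟨y, hyS, hy⟩ := hS_cover x.1 (norm_prod_le_iff.1 hx).1
    obtain ⟨z, hzT, hz⟩ := hT_cover x.2 (norm_prod_le_iff.1 hx).2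
    exact ⟨(y, z), mem_product.2 ⟨hyS, hzT⟩, norm_prod_le_iff.2 ⟨hy, hz⟩⟩

end Nets

lemma abs_exp_sub_exp_le {a b S : ℝ} (ha : a ≤ S) (hb : b ≤ S) :
    |exp a - exp b| ≤ exp S * |a - b| := by
  wlog hba : b ≤ a generalizing a b
  · rw [abs_sub_comm, abs_sub_comm a]
    exact this hb ha (le_of_not_ge hba)
  have hexp : exp a - exp b = exp a * (1 - exp (b - a)) := by
    rw [mul_sub, ← exp_add]; ring_nf
  rw [abs_of_nonneg (sub_nonneg.2 (exp_le_exp.2 hba)), abs_of_nonneg (sub_nonneg.2 hba), hexp]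
  have := add_one_le_exp (b - a)
  exact mul_le_mul (exp_le_exp.2 ha) (by linarith)
    (sub_nonneg.2 (exp_le_one_iff.2 (by linarith))) (exp_pos S).le

section Normalization

variable {ι : Type*} [Fintype ι]

lemma sum_abs_div_sum_sub_div_sum_le {u v : ι → ℝ} (hv : ∀ i, 0 ≤ v i)
    (hu_sum : 0 < ∑ i, u i) (hv_sum : 0 < ∑ i, v i) :
    ∑ i, |u i / ∑ j, u j - v i / ∑ j, v j| ≤ 2 * (∑ i, |u i - v i|) / ∑ i, u i := by
  set U := ∑ j, u j
  set V := ∑ j, v j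
  have hterm : ∀ i, |u i / U - v i / V| ≤ |u i - v i| / U + v i * |V - U| / (U * V) := by
    intro i
    have hsplit : u i / U - v i / V = (u i - v i) / U + v i * (V - U) / (U * V) := by
      field_simp; ring
    rw [hsplit]
    refine (abs_add_le _ _).trans_eq ?_
    rw [abs_div, abs_of_pos hu_sum, abs_div, abs_mul, abs_of_nonneg (hv i),
      abs_of_pos (mul_pos hu_sum hv_sum)]
  have hVU : |V - U| ≤ ∑ i, |u i - v i| := by
    rw [abs_sub_comm, ← sum_sub_distrib]
    exact abs_sum_le_sum_abs _ _
  calc ∑ i, |u i / U - v i / V|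
      ≤ ∑ i, (|u i - v i| / U + v i * |V - U| / (U * V)) := sum_le_sum fun i _ => hterm i
    _ = (∑ i, |u i - v i|) / U + |V - U| / U := by
        rw [sum_add_distrib, ← sum_div, ← sum_div, ← sum_mul, show ∑ i, v i = V from rfl]
        field_simp
    _ ≤ 2 * (∑ i, |u i - v i|) / U := by
        rw [two_mul, add_div]; gcongr

def softmax (s : ι → ℝ) (i : ι) : ℝ := exp (s i) / ∑ j, exp (s j)

lemma softmax_nonneg (s : ι → ℝ) (i : ι) : 0 ≤ softmax s i := by
  unfold softmax; positivity

lemma sum_softmax [Nonempty ι] (s : ι → ℝ) : ∑ i, softmax s i = 1 := by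
  unfold softmax
  rw [← sum_div, div_self (sum_pos (fun i _ => exp_pos (s i)) univ_nonempty).ne']

lemma sum_abs_softmax_sub_le [Nonempty ι] {s s' : ι → ℝ} {S Δ : ℝ} (hs : ∀ i, |s i| ≤ S)
    (hs' : ∀ i, |s' i| ≤ S) (hΔ : ∀ i, |s i - s' i| ≤ Δ) :
    ∑ i, |softmax s i - softmax s' i| ≤ 2 * exp (2 * S) * Δ := by
  have hΔ0 : 0 ≤ Δ := (abs_nonneg _).trans (hΔ (Classical.arbitrary ι))
  have hnum : ∑ i, |exp (s i) - exp (s' i)| ≤ Fintype.card ι * (exp S * Δ) := by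
    simpa using sum_le_card_nsmul univ _ _ fun i _ =>
      (abs_exp_sub_exp_le (abs_le.1 (hs i)).2 (abs_le.1 (hs' i)).2).trans
        (mul_le_mul_of_nonneg_left (hΔ i) (exp_pos S).le)
  have hden : Fintype.card ι * exp (-S) ≤ ∑ i, exp (s i) := by
    simpa using card_nsmul_le_sum univ _ _ fun i _ => exp_le_exp.2 (neg_le_of_abs_le (hs i))
  calc ∑ i, |softmax s i - softmax s' i|
      ≤ 2 * (∑ i, |exp (s i) - exp (s' i)|) / ∑ i, exp (s i) :=
        sum_abs_div_sum_sub_div_sum_le (fun i => (exp_pos _).le)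
          (sum_pos (fun i _ => exp_pos _) univ_nonempty) (sum_pos (fun i _ => exp_pos _) univ_nonempty)
    _ ≤ 2 * (Fintype.card ι * (exp S * Δ)) / (Fintype.card ι * exp (-S)) := by
        gcongr
    _ = 2 * exp (2 * S) * Δ := by
        rw [exp_neg, two_mul S, exp_add]; field_simp

lemma abs_sum_mul_sub_sum_mul_le {w w' a a' : ι → ℝ} {M η : ℝ} (hw' : ∀ i, 0 ≤ w' i)
    (hw'_sum : ∑ i, w' i = 1) (ha : ∀ i, |a i| ≤ M) (haa' : ∀ i, |a i - a' i| ≤ η) :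
    |∑ i, w i * a i - ∑ i, w' i * a' i| ≤ M * ∑ i, |w i - w' i| + η := by
  have hsplit : ∑ i, w i * a i - ∑ i, w' i * a' i
      = ∑ i, ((w i - w' i) * a i + w' i * (a i - a' i)) := by
    rw [← sum_sub_distrib]; exact sum_congr rfl fun i _ => by ring
  calc |∑ i, w i * a i - ∑ i, w' i * a' i|
      ≤ ∑ i, |(w i - w' i) * a i + w' i * (a i - a' i)| := hsplit ▸ abs_sum_le_sum_abs _ _
    _ ≤ ∑ i, (|w i - w' i| * M + w' i * η) := by
        gcongr with i
        refine (abs_add_le _ _).trans ?_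
        rw [abs_mul, abs_mul, abs_of_nonneg (hw' i)]
        exact add_le_add (mul_le_mul_of_nonneg_left (ha i) (abs_nonneg _))
          (mul_le_mul_of_nonneg_left (haa' i) (hw' i))
    _ = M * ∑ i, |w i - w' i| + η := by
        rw [sum_add_distrib, ← sum_mul, ← sum_mul, hw'_sum]; ring

lemma abs_sum_mul_le_of_sum_eq_one {w a : ι → ℝ} {M : ℝ} (hw : ∀ i, 0 ≤ w i)
    (hw_sum : ∑ i, w i = 1) (ha : ∀ i, |a i| ≤ M) : |∑ i, w i * a i| ≤ M :=
  calc |∑ i, w i * a i| ≤ ∑ i, w i * M := (abs_sum_le_sum_abs _ _).trans <|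
        sum_le_sum fun i _ => by
          rw [abs_mul, abs_of_nonneg (hw i)]; exact mul_le_mul_of_nonneg_left (ha i) (hw i)
    _ = M := by rw [← sum_mul, hw_sum, one_mul]

end Normalization

section PolyMoE

variable {d q k : ℕ}

/-- The ambient space of `Θ`: parameters `(A, b, c, η)` of one expert. -/
abbrev PolyParam (d q : ℕ) : Type :=
  (Fin d → Fin d → ℝ) × (Fin d → ℝ) × ℝ × (Fin q → ℝ)

def PolyMix.params (G : PolyMix d q k) (i : Fin k) : PolyParam d q :=
  (G.A i, G.b i, G.c i, G.η i)

def PolyMix.ofParams (θ : Fin k → PolyParam d q) : PolyMix d q k :=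
  ⟨fun i => (θ i).1, fun i => (θ i).2.1, fun i => (θ i).2.2.1, fun i => (θ i).2.2.2⟩

@[simp]
lemma PolyMix.params_ofParams (θ : Fin k → PolyParam d q) : (PolyMix.ofParams θ).params = θ :=
  rfl

lemma hasNetsOfDim_polyParam : HasNetsOfDim (PolyParam d q) (d * d + d + 1 + q) := by
  have h : HasNetsOfDim (PolyParam d q) _ := hasNetsOfDim_real.pi.pi.prod
    (hasNetsOfDim_real.pi.prod (hasNetsOfDim_real.prod hasNetsOfDim_real.pi))
  simp only [Fintype.card_fin, mul_one] at h
  convert h using 1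
  ring

def gate (p : PolyParam d q) (x : Fin d → ℝ) : ℝ :=
  qform p.1 x + dotp p.2.1 x + p.2.2.1

lemma polyMoE_eq_sum_softmax (h : (Fin d → ℝ) → (Fin q → ℝ) → ℝ) (G : PolyMix d q k)
    (x : Fin d → ℝ) :
    polyMoE h G x = ∑ i, softmax (fun j => gate (G.params j) x) i * h x (G.params i).2.2.2 :=
  rfl

lemma abs_apply_le_norm {ι : Type*} [Fintype ι] (x : ι → ℝ) (i : ι) : |x i| ≤ ‖x‖ :=
  norm_le_pi_norm x i

lemma abs_qform_le (A : Fin d → Fin d → ℝ) (x : Fin d → ℝ) :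
    |qform A x| ≤ d ^ 2 * ‖A‖ * ‖x‖ ^ 2 :=
  calc |qform A x| ≤ ∑ u, ∑ v, |A u v * x u * x v| :=
        (abs_sum_le_sum_abs _ _).trans (sum_le_sum fun u _ => abs_sum_le_sum_abs _ _)
    _ ≤ ∑ _u : Fin d, ∑ _v : Fin d, ‖A‖ * ‖x‖ * ‖x‖ := by
        gcongr with u _ v _
        rw [abs_mul, abs_mul]
        gcongr
        exacts [(abs_apply_le_norm _ v).trans (norm_le_pi_norm A u), abs_apply_le_norm x u,
          abs_apply_le_norm x v]
    _ = d ^ 2 * ‖A‖ * ‖x‖ ^ 2 := by simp; ring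

lemma abs_dotp_le (b x : Fin d → ℝ) : |dotp b x| ≤ d * ‖b‖ * ‖x‖ :=
  calc |dotp b x| ≤ ∑ u, |b u * x u| := abs_sum_le_sum_abs _ _
    _ ≤ ∑ _u : Fin d, ‖b‖ * ‖x‖ := by
        gcongr with u _
        rw [abs_mul]
        gcongr
        exacts [abs_apply_le_norm b u, abs_apply_le_norm x u]
    _ = d * ‖b‖ * ‖x‖ := by simp; ring

lemma gate_sub (p p' : PolyParam d q) (x : Fin d → ℝ) :
    gate p x - gate p' x = gate (p - p') x := by
  simp only [gate, qform, dotp, Prod.fst_sub, Prod.snd_sub, Pi.sub_apply, sub_mul,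
    sum_sub_distrib]
  ring

lemma abs_gate_le (p : PolyParam d q) (x : Fin d → ℝ) :
    |gate p x| ≤ (d ^ 2 * ‖x‖ ^ 2 + d * ‖x‖ + 1) * ‖p‖ := by
  have hA : ‖p.1‖ ≤ ‖p‖ := norm_fst_le p
  have hb : ‖p.2.1‖ ≤ ‖p‖ := (norm_fst_le p.2).trans (norm_snd_le p)
  have hc : |p.2.2.1| ≤ ‖p‖ :=
    (norm_fst_le p.2.2).trans ((norm_snd_le p.2).trans (norm_snd_le p))
  calc |gate p x| ≤ |qform p.1 x| + |dotp p.2.1 x| + |p.2.2.1| :=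
        (abs_add_le _ _).trans (add_le_add_left (abs_add_le _ _) _)
    _ ≤ d ^ 2 * ‖p‖ * ‖x‖ ^ 2 + d * ‖p‖ * ‖x‖ + ‖p‖ := by
        gcongr
        · exact (abs_qform_le _ _).trans (by gcongr)
        · exact (abs_dotp_le _ _).trans (by gcongr)
    _ = (d ^ 2 * ‖x‖ ^ 2 + d * ‖x‖ + 1) * ‖p‖ := by ring

/-- Bounded parameters and inputs give bounded gating scores, and `exp` is Lipschitz below any
bound. -/
lemma exists_lipschitz_polyMoE (h : (Fin d → ℝ) → (Fin q → ℝ) → ℝ) {M L B : ℝ}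
    (hbd : ∀ x η, |h x η| ≤ M) (hLip : ∀ x η₁ η₂, |h x η₁ - h x η₂| ≤ L * ‖η₁ - η₂‖)
    (hB : 0 ≤ B) (R : ℝ) :
    ∃ K, 0 ≤ K ∧ ∀ k, 0 < k → ∀ G G' : PolyMix d q k,
      (∀ i, ‖G.params i‖ ≤ R) → (∀ i, ‖G'.params i‖ ≤ R) → ∀ x, ‖x‖ ≤ B →
        |polyMoE h G x - polyMoE h G' x| ≤ K * ‖G.params - G'.params‖ := by
  have hM : 0 ≤ M := (abs_nonneg _).trans (hbd 0 0)
  set P : ℝ := d ^ 2 * B ^ 2 + d * B + 1 with hP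
  refine ⟨2 * M * exp (2 * (P * R)) * P + max L 0, by positivity, ?_⟩
  intro k hk G G' hG hG' x hx
  have : Nonempty (Fin k) := ⟨⟨0, hk⟩⟩
  have hgate : ∀ p : PolyParam d q, |gate p x| ≤ P * ‖p‖ := fun p =>
    (abs_gate_le p x).trans (by rw [hP]; gcongr)
  have hparam : ∀ i, ‖G.params i - G'.params i‖ ≤ ‖G.params - G'.params‖ := fun i =>
    norm_le_pi_norm (G.params - G'.params) i
  have hweights := sum_abs_softmax_sub_le (s := fun j => gate (G.params j) x)
    (s' := fun j => gate (G'.params j) x) (S := P * R) (Δ := P * ‖G.params - G'.params‖)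
    (fun i => (hgate _).trans (by gcongr; exact hG i))
    (fun i => (hgate _).trans (by gcongr; exact hG' i))
    (fun i => by rw [gate_sub]; exact (hgate _).trans (by gcongr; exact hparam i))
  have hexperts : ∀ i, |h x (G.params i).2.2.2 - h x (G'.params i).2.2.2| ≤
      max L 0 * ‖G.params - G'.params‖ := fun i =>
    calc _ ≤ L * ‖(G.params i - G'.params i).2.2.2‖ := hLip _ _ _
      _ ≤ max L 0 * ‖G.params i - G'.params i‖ := by
          gcongr
          · exact le_max_left _ _
          · exact (norm_snd_le _).trans ((norm_snd_le _).trans (norm_snd_le _))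
      _ ≤ max L 0 * ‖G.params - G'.params‖ := by gcongr; exact hparam i
  rw [polyMoE_eq_sum_softmax, polyMoE_eq_sum_softmax]
  calc _ ≤ M * ∑ i, |softmax (fun j => gate (G.params j) x) i -
        softmax (fun j => gate (G'.params j) x) i| + max L 0 * ‖G.params - G'.params‖ :=
        abs_sum_mul_sub_sum_mul_le (softmax_nonneg _) (sum_softmax _) (fun i => hbd _ _) hexperts
    _ ≤ M * (2 * exp (2 * (P * R)) * (P * ‖G.params - G'.params‖)) +
        max L 0 * ‖G.params - G'.params‖ := by gcongr
    _ = _ := by ring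

lemma abs_polyMoE_le (h : (Fin d → ℝ) → (Fin q → ℝ) → ℝ) {M : ℝ} (hbd : ∀ x η, |h x η| ≤ M)
    (hk : 0 < k) (G : PolyMix d q k) (x : Fin d → ℝ) : |polyMoE h G x| ≤ M :=
  have : Nonempty (Fin k) := ⟨⟨0, hk⟩⟩
  abs_sum_mul_le_of_sum_eq_one (softmax_nonneg _) (sum_softmax _) fun _ => hbd _ _

lemma exists_finset_approx_polyMoE (h : (Fin d → ℝ) → (Fin q → ℝ) → ℝ) (N : ℕ)
    {D : ℕ} {B R δ K : ℝ} (hR : 0 ≤ R) (hδ : 0 < δ) (hK0 : 0 ≤ K)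
    (hK : ∀ k, 0 < k → ∀ G G' : PolyMix d q k,
      (∀ i, ‖G.params i‖ ≤ R) → (∀ i, ‖G'.params i‖ ≤ R) → ∀ x, ‖x‖ ≤ B →
        |polyMoE h G x - polyMoE h G' x| ≤ K * ‖G.params - G'.params‖)
    (hD : HasNetsOfDim (PolyParam d q) D) :
    ∃ T : Finset ((Fin d → ℝ) → ℝ), (T.card : ℝ) ≤ N * (2 * R / δ + 1) ^ (N * D) ∧
      ∀ k, 1 ≤ k → k ≤ N → ∀ G : PolyMix d q k, (∀ i, ‖G.params i‖ ≤ R) →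
        ∃ g ∈ T, ∀ x, ‖x‖ ≤ B → |polyMoE h G x - g x| ≤ K * δ := by
  classical
  have hnets (k : ℕ) : ∃ S : Finset (Fin k → PolyParam d q),
      (S.card : ℝ) ≤ (2 * R / δ + 1) ^ (k * D) ∧ (∀ θ ∈ S, ‖θ‖ ≤ R) ∧
        ∀ θ, ‖θ‖ ≤ R → ∃ θ' ∈ S, ‖θ - θ'‖ ≤ δ := by
    simpa using hD.pi (ι := Fin k) hR hδ
  choose S hS_card hS_mem hS_cover using hnets
  refine ⟨(Icc 1 N).biUnion fun k => (S k).image fun θ => polyMoE h (PolyMix.ofParams θ),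
    ?_, ?_⟩
  · calc _ ≤ ∑ k ∈ Icc 1 N, ((S k).card : ℝ) := by
          exact_mod_cast card_biUnion_le.trans (sum_le_sum fun k _ => card_image_le)
      _ ≤ ∑ _k ∈ Icc 1 N, (2 * R / δ + 1) ^ (N * D) := by
          gcongr with k hk
          refine (hS_card k).trans (pow_le_pow_right₀ ?_ ?_)
          · have : 0 ≤ 2 * R / δ := by positivity
            linarith
          · exact Nat.mul_le_mul_right D (mem_Icc.1 hk).2
      _ = N * (2 * R / δ + 1) ^ (N * D) := by simp
  · intro k hk1 hkN G hG
    obtain ⟨θ, hθS, hθ⟩ := hS_cover k G.params ((pi_norm_le_iff_of_nonneg hR).2 hG)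
    refine ⟨polyMoE h (PolyMix.ofParams θ),
      mem_biUnion.2 ⟨k, mem_Icc.2 ⟨hk1, hkN⟩, mem_image_of_mem _ hθS⟩, fun x hx => ?_⟩
    have hθR : ∀ i, ‖(PolyMix.ofParams θ).params i‖ ≤ R := fun i =>
      (norm_le_pi_norm θ i).trans (hS_mem k θ hθS)
    calc _ ≤ K * ‖G.params - (PolyMix.ofParams θ).params‖ := hK k hk1 G _ hG hθR x hx
      _ ≤ K * δ := by rw [PolyMix.params_ofParams]; gcongr

end PolyMoE

/-- Brackets of `L²(μ)`-width `ε` around the centres `g ∈ T`: `g ± ε/2` on a set carrying `μ`,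
`±M` off it. -/
lemma exists_brackets_of_finset {d : ℕ} (μ : Measure (Fin d → ℝ)) [IsProbabilityMeasure μ]
    {s : Set (Fin d → ℝ)} (hs : ∀ᵐ x ∂μ, x ∈ s) {M ε : ℝ} (hM : 0 ≤ M) (hε : 0 ≤ ε)
    (T : Finset ((Fin d → ℝ) → ℝ)) :
    ∃ Lo Up : Fin T.card → (Fin d → ℝ) → ℝ,
      (∀ i, (∀ x, Lo i x ≤ Up i x) ∧ l2norm μ (fun x => Up i x - Lo i x) ≤ ε) ∧
      ∀ f : (Fin d → ℝ) → ℝ, (∀ x, |f x| ≤ M) → (∃ g ∈ T, ∀ x ∈ s, |f x - g x| ≤ ε / 2) →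
        ∃ i, ∀ x, Lo i x ≤ f x ∧ f x ≤ Up i x := by
  classical
  let center (i : Fin T.card) : (Fin d → ℝ) → ℝ := T.equivFin.symm i
  refine ⟨fun i x => if x ∈ s then center i x - ε / 2 else -M,
    fun i x => if x ∈ s then center i x + ε / 2 else M, fun i => ⟨fun x => ?_, ?_⟩, ?_⟩
  · dsimp only
    split_ifs <;> linarith
  · have hwidth : (fun x => ((if x ∈ s then center i x + ε / 2 else M) -
        (if x ∈ s then center i x - ε / 2 else -M)) ^ 2) =ᵐ[μ] fun _ => ε ^ 2 := by
      filter_upwards [hs] with x hx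
      simp only [if_pos hx]
      ring
    simp [l2norm, integral_congr_ae hwidth, Real.sqrt_sq hε]
  · rintro f hfM ⟨g, hgT, hfg⟩
    refine ⟨T.equivFin ⟨g, hgT⟩, fun x => ?_⟩
    have hcenter : center (T.equivFin ⟨g, hgT⟩) = g := by simp [center]
    dsimp only
    rw [hcenter]
    split_ifs with hx
    · have := abs_le.1 (hfg x hx)
      constructor <;> linarith
    · exact abs_le.1 (hfM x)

lemma nat_mul_div_add_one_pow_le (N E : ℕ) {a ε : ℝ} (ha : 0 ≤ a) (hε : 0 < ε) (hε1 : ε ≤ 1) :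
    N * (a / ε + 1) ^ E ≤ ((N + 1) * (a + 1) / ε) ^ (E + 1) := by
  have hone : 1 ≤ (a + 1) / ε := by rw [le_div_iff₀ hε]; linarith
  have hN : (N : ℝ) ≤ (N + 1) * (a + 1) / ε := by
    rw [mul_div_assoc]; nlinarith
  have hbase : a / ε + 1 ≤ (N + 1) * (a + 1) / ε := by
    calc a / ε + 1 ≤ (a + 1) / ε := by rw [add_div]; gcongr; rwa [le_div_iff₀ hε, one_mul]
      _ ≤ (N + 1) * (a + 1) / ε := by
          rw [mul_div_assoc]; nlinarith [Nat.cast_nonneg (α := ℝ) N]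
  rw [pow_succ']
  gcongr

theorem poly_moe_bracketing_entropy_general
    {d q N : ℕ} (h : (Fin d → ℝ) → (Fin q → ℝ) → ℝ) (M L B : ℝ)
    (hbd : ∀ (x : Fin d → ℝ) (η : Fin q → ℝ), |h x η| ≤ M)
    (hLip : ∀ (x : Fin d → ℝ) (η₁ η₂ : Fin q → ℝ), |h x η₁ - h x η₂| ≤ L * ‖η₁ - η₂‖)
    (Θ : Set ((Fin d → Fin d → ℝ) × (Fin d → ℝ) × ℝ × (Fin q → ℝ)))
    (hΘ : IsCompact Θ)
    (μ : Measure (Fin d → ℝ)) [IsProbabilityMeasure μ]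
    (hsupp : ∀ᵐ x ∂μ, ‖x‖ ≤ B) :
    ∃ C > 0, ∃ C' > 0, ∀ ε : ℝ, 0 < ε → ε ≤ 1 / 2 →
      ∃ m : ℕ, ∃ Lo Up : Fin m → (Fin d → ℝ) → ℝ,
        (m : ℝ) ≤ (C / ε) ^ C' ∧
        (∀ i, (∀ x, Lo i x ≤ Up i x) ∧ l2norm μ (fun x => Up i x - Lo i x) ≤ ε) ∧
        ∀ k : ℕ, 1 ≤ k → k ≤ N → ∀ G : PolyMix d q k, inClassP Θ G →
          ∃ i, ∀ x : Fin d → ℝ, Lo i x ≤ polyMoE h G x ∧ polyMoE h G x ≤ Up i x := by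
  have hM : 0 ≤ M := (abs_nonneg _).trans (hbd 0 0)
  have hB : 0 ≤ B := by
    obtain ⟨x, hx⟩ := hsupp.exists
    exact (norm_nonneg x).trans hx
  obtain ⟨R, hR, hΘR⟩ := hΘ.isBounded.exists_pos_norm_le
  obtain ⟨K, hK0, hK⟩ := exists_lipschitz_polyMoE h hbd hLip hB R
  refine ⟨(N + 1) * (4 * R * (K + 1) + 1), by positivity, N * (d * d + d + 1 + q) + 1,
    Nat.succ_pos _, fun ε hε hε2 => ?_⟩
  set δ := ε / (2 * (K + 1)) with hδ_def
  have hδ : 0 < δ := by positivity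
  have hKδ : K * δ ≤ ε / 2 :=
    calc K * δ ≤ (K + 1) * δ := by gcongr; linarith
      _ = ε / 2 := by rw [hδ_def]; field_simp
  obtain ⟨T, hT_card, hT⟩ :=
    exists_finset_approx_polyMoE h N hR.le hδ hK0 hK hasNetsOfDim_polyParam
  obtain ⟨Lo, Up, hbrackets, hcover⟩ := exists_brackets_of_finset μ hsupp hM hε.le T
  refine ⟨T.card, Lo, Up, ?_, hbrackets, fun k hk1 hkN G hG => hcover _
    (abs_polyMoE_le h hbd hk1 G) ?_⟩
  · calc (T.card : ℝ) ≤ N * (4 * R * (K + 1) / ε + 1) ^ (N * (d * d + d + 1 + q)) := by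
          convert hT_card using 3; rw [hδ_def]; field_simp; ring
      _ ≤ _ := nat_mul_div_add_one_pow_le _ _ (by positivity) hε (by linarith)
  · obtain ⟨g, hgT, hg⟩ := hT k hk1 hkN G fun i => hΘR _ (hG i)
    exact ⟨g, hgT, fun x hx => (hg x hx).trans hKδ⟩

/-- **Theorem (bracketing entropy of the MoE class `F_N(Θ)`).** If the expert
function is bounded and Lipschitz in `η` uniformly in `x`, `Θ` is compact and
`μ` has bounded support, then for every `ε ∈ (0,1/2]` the class `F_N(Θ)` can be
covered by at most `(C/ε)^{C'}` brackets `[L_i, U_i]` with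
`‖U_i − L_i‖_{L²(μ)} ≤ ε`; equivalently
`H_B(ε, F_N(Θ), ‖·‖_{L²(μ)}) ≲ log(1/ε)`. -/
theorem poly_moe_bracketing_entropy
    {d q N : ℕ} (h : (Fin d → ℝ) → (Fin q → ℝ) → ℝ) (M L B : ℝ)
    (hbd : ∀ (x : Fin d → ℝ) (η : Fin q → ℝ), |h x η| ≤ M)
    (hLip : ∀ (x : Fin d → ℝ) (η₁ η₂ : Fin q → ℝ), |h x η₁ - h x η₂| ≤ L * ‖η₁ - η₂‖)
    (Θ : Set ((Fin d → Fin d → ℝ) × (Fin d → ℝ) × ℝ × (Fin q → ℝ)))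
    (hΘ : IsCompact Θ) (hN : 1 ≤ N)
    (μ : Measure (Fin d → ℝ)) [IsProbabilityMeasure μ]
    (hsupp : ∀ᵐ x ∂μ, ‖x‖ ≤ B) :
    ∃ C > 0, ∃ C' > 0, ∀ ε : ℝ, 0 < ε → ε ≤ 1 / 2 →
      ∃ m : ℕ, ∃ Lo Up : Fin m → (Fin d → ℝ) → ℝ,
        (m : ℝ) ≤ (C / ε) ^ C' ∧
        (∀ i, (∀ x, Lo i x ≤ Up i x) ∧ l2norm μ (fun x => Up i x - Lo i x) ≤ ε) ∧
        ∀ k : ℕ, 1 ≤ k → k ≤ N → ∀ G : PolyMix d q k, inClassP Θ G →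
          ∃ i, ∀ x : Fin d → ℝ, Lo i x ≤ polyMoE h G x ∧ polyMoE h G x ≤ Up i x :=
  poly_moe_bracketing_entropy_general h M L B hbd hLip Θ hΘ μ hsupp

end
end
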